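/- arXiv:math/0110082 — 8 statements merged into one kernel-verified Lean document; each statement's English description precedes it below -/
import Mathlib

section
/- Let m ≥ 2 and let (H_n) be a sequence of real symmetric m×m matrices, each of signature (m−1,1), converging (entrywise) to a real symmetric matrix H which is also of signature (m−1,1). Then there exists a sequence (M_n) of real m×m matrices converging to the identity matrix such that H_n = M_nᵀ H M_n for every n. -/
/-!
Write `A` for the limit matrix; it is symmetric and invertible. The map
`congrChart A X = Xᵀ A X + (A X - Xᵀ A)` has symmetric part `Xᵀ A X`, and the antisymmetric
correction makes its derivative at `1` equal to `X ↦ 2 A X`, which is invertible. By the inverse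
function theorem it has a local inverse `g` near `A` with `g A = 1`, continuous at `A`; for a
symmetric `B` near `A`, comparing `congrChart A (g B) = B` with its transpose gives
`B = (g B)ᵀ A (g B)`. So `M n = g (H n)`
works for large `n`, and any two matrices of signature `(m-1,1)` are congruent, which takes care
of the finitely many remaining `n`.
-/

open Matrix Filter Topology

/-- A real symmetric `m × m` matrix has signature `(m-1, 1)` if it is congruent to the
diagonal matrix `diag(1, …, 1, −1)`. -/
def HasLorentzSignature (m : ℕ) (H : Matrix (Fin m) (Fin m) ℝ) : Prop :=
  ∃ P : Matrix (Fin m) (Fin m) ℝ, IsUnit P.det ∧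
    H = Pᵀ * diagonal (fun i : Fin m => if (i : ℕ) = m - 1 then (-1 : ℝ) else 1) * P

namespace Matrix

variable {n : Type*} [Fintype n]

def congrChart (A X : Matrix n n ℝ) : Matrix n n ℝ := Xᵀ * A * X + (A * X - Xᵀ * A)

theorem eq_transpose_mul_mul_of_congrChart_eq {A B X : Matrix n n ℝ} (hA : A.IsSymm)
    (hB : B.IsSymm) (hX : congrChart A X = B) : B = Xᵀ * A * X := by
  have hXt : Xᵀ * A * X + (Xᵀ * A - A * X) = B := by
    simpa [congrChart, hA.eq, hB.eq, Matrix.mul_assoc] using congrArg transpose hX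
  have : (2 : ℝ) • B = (2 : ℝ) • (Xᵀ * A * X) := by
    rw [two_smul, two_smul]
    nth_rewrite 1 [← hX]
    rw [← hXt, congrChart]
    abel
  exact smul_right_injective _ two_ne_zero this

variable [DecidableEq n]

section Frobenius

attribute [local instance] frobeniusSeminormedAddCommGroup frobeniusNormedAddCommGroup
  frobeniusNormedSpace frobeniusNormedRing frobeniusNormedAlgebra

theorem hasStrictFDerivAt_congrChart (A : Matrix n n ℝ) :
    HasStrictFDerivAt (congrChart A) (ContinuousLinearMap.mul ℝ _ ((2 : ℝ) • A)) 1 := by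
  let T : Matrix n n ℝ →L[ℝ] Matrix n n ℝ :=
    LinearMap.toContinuousLinearMap (transposeLinearEquiv n n ℝ ℝ).toLinearMap
  have hT : HasStrictFDerivAt (fun X : Matrix n n ℝ => Xᵀ) T 1 := T.hasStrictFDerivAt
  have hL : HasStrictFDerivAt (fun X : Matrix n n ℝ => A * X) (ContinuousLinearMap.mul ℝ _ A) 1 :=
    (ContinuousLinearMap.mul ℝ _ A).hasStrictFDerivAt
  refine (((hT.mul_const' A).mul' (hasStrictFDerivAt_id _)).add
    (hL.sub (hT.mul_const' A))).congr_fderiv ?_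
  ext X : 1
  simp [two_smul]

theorem exists_continuousAt_congruence {A : Matrix n n ℝ} (hA : IsUnit A) (hAs : A.IsSymm) :
    ∃ g : Matrix n n ℝ → Matrix n n ℝ, ContinuousAt g A ∧ g A = 1 ∧
      ∀ᶠ B in 𝓝 A, B.IsSymm → B = (g B)ᵀ * A * g B := by
  let D : Matrix n n ℝ ≃L[ℝ] Matrix n n ℝ :=
    ((hA.smul (Units.mk0 (2 : ℝ) two_ne_zero)).unit.mulLeftLinearEquiv ℝ _).toContinuousLinearEquiv
  have hf : HasStrictFDerivAt (congrChart A) (D : Matrix n n ℝ →L[ℝ] Matrix n n ℝ) 1 :=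
    (hasStrictFDerivAt_congrChart A).congr_fderiv (by ext X : 1; rfl)
  have hf1 : congrChart A 1 = A := by simp [congrChart]
  have hcont := hf.localInverse_continuousAt
  have himage := hf.localInverse_apply_image
  have hinv := hf.eventually_right_inverse
  rw [hf1] at hcont himage hinv
  refine ⟨hf.localInverse _ _ 1, hcont, himage, ?_⟩
  filter_upwards [hinv] with B hB hBs
  exact eq_transpose_mul_mul_of_congrChart_eq hAs hBs hB

end Frobenius

end Matrix

namespace HasLorentzSignature

variable {m : ℕ} {A B : Matrix (Fin m) (Fin m) ℝ}

theorem isUnit (hA : HasLorentzSignature m A) : IsUnit A := by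
  obtain ⟨P, hP, rfl⟩ := hA
  have hD : IsUnit (diagonal fun i : Fin m => if (i : ℕ) = m - 1 then (-1 : ℝ) else 1) :=
    isUnit_diagonal.mpr <| Pi.isUnit_iff.mpr fun i => by split_ifs <;> simp
  have hPt : IsUnit Pᵀ := (isUnit_iff_isUnit_det _).mpr (by rwa [det_transpose])
  exact (hPt.mul hD).mul ((isUnit_iff_isUnit_det _).mpr hP)

theorem exists_congruence (hA : HasLorentzSignature m A) (hB : HasLorentzSignature m B) :
    ∃ M, B = Mᵀ * A * M := by
  obtain ⟨P, hP, rfl⟩ := hA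
  obtain ⟨Q, -, rfl⟩ := hB
  refine ⟨P⁻¹ * Q, ?_⟩
  have hPt : IsUnit Pᵀ.det := by rwa [det_transpose]
  simp only [transpose_mul, transpose_nonsing_inv, Matrix.mul_assoc,
    nonsing_inv_mul_cancel_left _ _ hPt, mul_nonsing_inv_cancel_left _ _ hP]

end HasLorentzSignature

theorem exists_congruence_seq_tendsto_one_general {m : ℕ}
    (H : ℕ → Matrix (Fin m) (Fin m) ℝ) (Hlim : Matrix (Fin m) (Fin m) ℝ)
    (hsymm : ∀ n, (H n).IsSymm) (hsig : ∀ n, HasLorentzSignature m (H n))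
    (hlsymm : Hlim.IsSymm) (hlsig : HasLorentzSignature m Hlim)
    (hconv : Tendsto H atTop (𝓝 Hlim)) :
    ∃ M : ℕ → Matrix (Fin m) (Fin m) ℝ,
      Tendsto M atTop (𝓝 1) ∧ ∀ n, H n = (M n)ᵀ * Hlim * M n := by
  classical
  obtain ⟨g, hgc, hg1, hg⟩ := exists_continuousAt_congruence hlsig.isUnit hlsymm
  choose F hF using fun n => hlsig.exists_congruence (hsig n)
  have hev : ∀ᶠ n in atTop, H n = (g (H n))ᵀ * Hlim * g (H n) :=
    (hconv.eventually hg).mono fun n hn => hn (hsymm n)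
  refine ⟨fun n => if H n = (g (H n))ᵀ * Hlim * g (H n) then g (H n) else F n, ?_, fun n => ?_⟩
  · have hgH : Tendsto (fun n => g (H n)) atTop (𝓝 1) := hg1 ▸ hgc.tendsto.comp hconv
    exact hgH.congr' (hev.mono fun n hn => (if_pos hn).symm)
  · dsimp only
    split_ifs with h
    exacts [h, hF n]

/-- If a sequence of symmetric matrices of signature `(m-1,1)` converges to a symmetric matrix
`Hlim` of signature `(m-1,1)`, then there is a sequence `M n → 1` with
`H n = (M n)ᵀ * Hlim * M n` for all `n`. -/
theorem exists_congruence_seq_tendsto_one {m : ℕ} (hm : 2 ≤ m)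
    (H : ℕ → Matrix (Fin m) (Fin m) ℝ) (Hlim : Matrix (Fin m) (Fin m) ℝ)
    (hsymm : ∀ n, (H n).IsSymm) (hsig : ∀ n, HasLorentzSignature m (H n))
    (hlsymm : Hlim.IsSymm) (hlsig : HasLorentzSignature m Hlim)
    (hconv : Tendsto H atTop (𝓝 Hlim)) :
    ∃ M : ℕ → Matrix (Fin m) (Fin m) ℝ,
      Tendsto M atTop (𝓝 1) ∧ ∀ n, H n = (M n)ᵀ * Hlim * M n :=
  exists_congruence_seq_tendsto_one_general H Hlim hsymm hsig hlsymm hlsig hconv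
end

section
/- Let m ≥ 2. Let (H_n) and (G_n) be sequences of real symmetric m×m matrices of signature (m−1,1) converging respectively to matrices H and G of signature (m−1,1), and let (M_n) be a sequence of invertible real m×m matrices with M_nᵀ H_n M_n = G_n for all n. If sup_n ‖M_n‖ = ∞ (the sequence is unbounded in operator norm), then there exists a strictly increasing map φ : ℕ → ℕ such that the set AS((M_{φ(k)})) of approximately stable vectors of the subsequence (M_{φ(k)}) is a linear hyperplane of ℝ^m which is lightlike for G. -/
open Matrix Filter Topology

/-- `v` is approximately stable for the sequence of matrices `N` if there is a sequence
`u k → v` with `(N k) *ᵥ (u k)` bounded. -/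
def ApproxStable {m : ℕ} (N : ℕ → Matrix (Fin m) (Fin m) ℝ) (v : Fin m → ℝ) : Prop :=
  ∃ u : ℕ → (Fin m → ℝ), Tendsto u atTop (𝓝 v) ∧ ∃ C : ℝ, ∀ k, ‖(N k) *ᵥ (u k)‖ ≤ C

/-- `P` is a linear hyperplane of `ℝ^m` which is lightlike for the symmetric matrix `G`,
i.e. the restriction to `P` of the bilinear form `(u, w) ↦ uᵀ G w` is degenerate. -/
def LightlikeHyperplane {m : ℕ} (G : Matrix (Fin m) (Fin m) ℝ)
    (P : Submodule ℝ (Fin m → ℝ)) : Prop :=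
  Module.finrank ℝ P = m - 1 ∧ ∃ u ∈ P, u ≠ 0 ∧ ∀ w ∈ P, u ⬝ᵥ (G *ᵥ w) = 0

/-!
Write `M_k b_i = σ_i a_i` with orthonormal families `(b_i)`, `(a_i)` (singular value
decomposition). Along a subsequence the singular vectors converge, to `β_i` and `α_i`, and every
singular value converges in `[0, ∞]`; since `M_k` is unbounded, some `σ_{i₀}` tends to `∞`.
If `σ_i` and `σ_j` both tend to `∞`, then `a_iᵀ H_k a_j = σ_i⁻¹ σ_j⁻¹ b_iᵀ G_k b_j → 0`, so `α_i`
and `α_j` span a totally isotropic plane of the Lorentzian form `H` unless `i = j`: the index `i₀`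
is unique. As `|det M_k|² = |det G_k| / |det H_k|` stays bounded, some other `σ_{j₀}` tends to `0`.

The approximately stable vectors form the hyperplane `P = β_{i₀}^⊥`: along `b_{i₀}` the matrices
expand by `σ_{i₀} → ∞`, in the other directions they stay bounded. Finally `β_{j₀} ∈ P`, and for
`w ∈ P`, approximated by `u_k` with `M_k u_k` bounded,
`β_{j₀}ᵀ G w = lim σ_{j₀} a_{j₀}ᵀ H_k M_k u_k = 0`, so `P` is lightlike for `G`.
-/

open Set

section Vectors

variable {n : Type*} [Fintype n]

theorem Filter.Tendsto.dotProduct {α R : Type*} [TopologicalSpace R]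
    [NonUnitalNonAssocSemiring R] [ContinuousAdd R] [ContinuousMul R] {l : Filter α}
    {x y : α → n → R} {x₀ y₀ : n → R} (hx : Tendsto x l (𝓝 x₀)) (hy : Tendsto y l (𝓝 y₀)) :
    Tendsto (fun k => x k ⬝ᵥ y k) l (𝓝 (x₀ ⬝ᵥ y₀)) :=
  ((continuous_fst.dotProduct continuous_snd).tendsto (x₀, y₀)).comp (hx.prodMk_nhds hy)

theorem Filter.Tendsto.mulVec {α R : Type*} [TopologicalSpace R]
    [NonUnitalNonAssocSemiring R] [ContinuousAdd R] [ContinuousMul R] {l : Filter α}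
    {A : α → Matrix n n R} {x : α → n → R} {A₀ : Matrix n n R} {x₀ : n → R}
    (hA : Tendsto A l (𝓝 A₀)) (hx : Tendsto x l (𝓝 x₀)) :
    Tendsto (fun k => A k *ᵥ x k) l (𝓝 (A₀ *ᵥ x₀)) :=
  ((continuous_fst.matrix_mulVec continuous_snd).tendsto (A₀, x₀)).comp (hA.prodMk_nhds hx)

theorem Matrix.dotProduct_mulVec_of_transpose_mul_mul_eq {R : Type*} [CommSemiring R]
    {P H G : Matrix n n R} (h : Pᵀ * H * P = G) (x y : n → R) :
    (P *ᵥ x) ⬝ᵥ (H *ᵥ (P *ᵥ y)) = x ⬝ᵥ (G *ᵥ y) := by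
  rw [← h, ← mulVec_mulVec, ← mulVec_mulVec, dotProduct_mulVec x Pᵀ, vecMul_transpose]

theorem Matrix.norm_le_one_of_dotProduct_self_eq_one {v : n → ℝ} (hv : v ⬝ᵥ v = 1) :
    ‖v‖ ≤ 1 := by
  refine (pi_norm_le_iff_of_nonneg zero_le_one).2 fun i => ?_
  rw [Real.norm_eq_abs, ← sq_le_one_iff_abs_le_one, sq, ← hv]
  exact Finset.single_le_sum (f := fun j => v j * v j) (fun j _ => mul_self_nonneg _)
    (Finset.mem_univ i)

theorem Matrix.abs_dotProduct_le (v w : n → ℝ) :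
    |v ⬝ᵥ w| ≤ Fintype.card n * (‖v‖ * ‖w‖) := by
  calc |v ⬝ᵥ w| ≤ ∑ i, |v i * w i| := Finset.abs_sum_le_sum_abs _ _
    _ ≤ ∑ _i : n, ‖v‖ * ‖w‖ := Finset.sum_le_sum fun i _ => by
        rw [abs_mul]
        exact mul_le_mul (norm_le_pi_norm v i) (norm_le_pi_norm w i) (abs_nonneg _)
          (norm_nonneg _)
    _ = _ := by simp

theorem Filter.Tendsto.dotProduct_eq_of_forall {ι : Type*} {l : Filter ι} [l.NeBot]
    {x y : ι → n → ℝ} {x₀ y₀ : n → ℝ} (hx : Tendsto x l (𝓝 x₀)) (hy : Tendsto y l (𝓝 y₀))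
    {c : ℝ} (h : ∀ k, x k ⬝ᵥ y k = c) : x₀ ⬝ᵥ y₀ = c :=
  tendsto_nhds_unique (hx.dotProduct hy) (by simp only [h]; exact tendsto_const_nhds)

end Vectors

namespace Matrix

variable {n : Type*} [Fintype n] [DecidableEq n] (M : Matrix n n ℝ)

noncomputable def rightSingularVector (i : n) : n → ℝ :=
  (isHermitian_conjTranspose_mul_self M).eigenvectorBasis i

noncomputable def singularValue (i : n) : ℝ :=
  √((isHermitian_conjTranspose_mul_self M).eigenvalues i)

noncomputable def leftSingularVector (i : n) : n → ℝ :=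
  (M.singularValue i)⁻¹ • (M *ᵥ M.rightSingularVector i)

theorem rightSingularVector_dotProduct (i j : n) :
    M.rightSingularVector i ⬝ᵥ M.rightSingularVector j = if i = j then 1 else 0 := by
  rw [← orthonormal_iff_ite.1 (isHermitian_conjTranspose_mul_self M).eigenvectorBasis.orthonormal,
    EuclideanSpace.inner_eq_star_dotProduct, star_trivial, dotProduct_comm]
  rfl

theorem sum_rightSingularVector_dotProduct_smul (v : n → ℝ) :
    ∑ i, (M.rightSingularVector i ⬝ᵥ v) • M.rightSingularVector i = v := by
  have := congrArg WithLp.ofLp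
    ((isHermitian_conjTranspose_mul_self M).eigenvectorBasis.sum_repr' (WithLp.toLp 2 v))
  simpa [rightSingularVector, EuclideanSpace.inner_eq_star_dotProduct, dotProduct_comm] using this

theorem singularValue_nonneg (i : n) : 0 ≤ M.singularValue i :=
  Real.sqrt_nonneg _

theorem singularValue_sq (i : n) :
    M.singularValue i ^ 2 = (isHermitian_conjTranspose_mul_self M).eigenvalues i :=
  Real.sq_sqrt (eigenvalues_conjTranspose_mul_self_nonneg M i)

theorem mulVec_rightSingularVector_dotProduct_mulVec (i : n) (u : n → ℝ) :
    (M *ᵥ M.rightSingularVector i) ⬝ᵥ (M *ᵥ u) =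
      M.singularValue i ^ 2 * (M.rightSingularVector i ⬝ᵥ u) := by
  have h : (Mᵀ * M) *ᵥ M.rightSingularVector i =
      (isHermitian_conjTranspose_mul_self M).eigenvalues i • M.rightSingularVector i := by
    simpa [rightSingularVector, conjTranspose_eq_transpose_of_trivial] using
      (isHermitian_conjTranspose_mul_self M).mulVec_eigenvectorBasis i
  rw [singularValue_sq, ← smul_eq_mul, ← smul_dotProduct, ← h, ← mulVec_mulVec,
    mulVec_transpose, dotProduct_mulVec]

theorem rightSingularVector_ne_zero (i : n) : M.rightSingularVector i ≠ 0 := by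
  intro h
  simpa [h] using M.rightSingularVector_dotProduct i i

variable {M}

theorem singularValue_pos (hM : IsUnit M.det) (i : n) : 0 < M.singularValue i := by
  have hMb : M *ᵥ M.rightSingularVector i ≠ 0 := fun h =>
    M.rightSingularVector_ne_zero i (eq_zero_of_mulVec_eq_zero hM.ne_zero h)
  have h := M.mulVec_rightSingularVector_dotProduct_mulVec i (M.rightSingularVector i)
  rw [rightSingularVector_dotProduct, if_pos rfl, mul_one] at h
  refine (M.singularValue_nonneg i).lt_of_ne fun h0 => hMb ?_
  rwa [← h0, zero_pow two_ne_zero, dotProduct_self_eq_zero] at h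

theorem mulVec_rightSingularVector (hM : IsUnit M.det) (i : n) :
    M *ᵥ M.rightSingularVector i = M.singularValue i • M.leftSingularVector i := by
  rw [leftSingularVector, smul_smul, mul_inv_cancel₀ (singularValue_pos hM i).ne', one_smul]

theorem leftSingularVector_dotProduct_mulVec (hM : IsUnit M.det) (i : n) (u : n → ℝ) :
    M.leftSingularVector i ⬝ᵥ (M *ᵥ u) =
      M.singularValue i * (M.rightSingularVector i ⬝ᵥ u) := by
  have hσ := (singularValue_pos hM i).ne'
  rw [leftSingularVector, smul_dotProduct, mulVec_rightSingularVector_dotProduct_mulVec,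
    smul_eq_mul]
  field_simp

theorem leftSingularVector_dotProduct (hM : IsUnit M.det) (i j : n) :
    M.leftSingularVector i ⬝ᵥ M.leftSingularVector j = if i = j then 1 else 0 := by
  have hσ := (singularValue_pos hM j).ne'
  have h := leftSingularVector_dotProduct_mulVec hM i (M.rightSingularVector j)
  rw [mulVec_rightSingularVector hM, dotProduct_smul, smul_eq_mul,
    rightSingularVector_dotProduct] at h
  split_ifs at h ⊢ with hij
  · subst hij; field_simp at h; exact h
  · simpa [hσ] using h

variable (M)

theorem prod_singularValue : ∏ i, M.singularValue i = |M.det| := by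
  have h := (isHermitian_conjTranspose_mul_self M).det_eq_prod_eigenvalues
  rw [det_mul, det_conjTranspose, star_trivial] at h
  simp only [RCLike.ofReal_real_eq_id, id] at h
  rw [← Real.sqrt_sq_eq_abs, sq, h, Real.sqrt_prod _ fun i _ =>
    eigenvalues_conjTranspose_mul_self_nonneg M i]
  rfl

theorem sum_singularValue_sq : ∑ i, M.singularValue i ^ 2 = ∑ i, ∑ j, M i j ^ 2 := by
  have h := (isHermitian_conjTranspose_mul_self M).trace_eq_sum_eigenvalues
  simp only [RCLike.ofReal_real_eq_id, id] at h
  simp only [singularValue_sq, ← h, trace, diag, mul_apply, conjTranspose_apply, star_trivial]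
  rw [Finset.sum_comm]
  simp [sq]

end Matrix

theorem Matrix.finrank_ker_dotProductEquiv {K n : Type*} [Field K] [Fintype n] [DecidableEq n]
    {v : n → K} (hv : v ≠ 0) :
    Module.finrank K (LinearMap.ker (dotProductEquiv K n v)) = Fintype.card n - 1 := by
  have h := Module.Dual.finrank_ker_add_one_of_ne_zero
    ((LinearEquiv.map_ne_zero_iff (dotProductEquiv K n)).2 hv)
  rw [Module.finrank_fintype_fun_eq_card] at h
  omega

section Extraction

open scoped ENNReal

theorem exists_strictMono_tendsto_atTop_of_not_bddAbove {f : ℕ → ℝ}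
    (hf : ¬ BddAbove (range f)) : ∃ φ : ℕ → ℕ, StrictMono φ ∧ Tendsto (f ∘ φ) atTop atTop := by
  have hfreq : ∀ K : ℕ, ∃ᶠ k in atTop, (K : ℝ) ≤ f k := fun K => by
    by_contra h
    rw [not_frequently] at h
    exact hf (isBoundedUnder_of_eventually_le (h.mono fun k hk => (not_le.1 hk).le)).bddAbove_range
  obtain ⟨φ, hφ, hφK⟩ := extraction_forall_of_frequently hfreq
  exact ⟨φ, hφ, tendsto_atTop_mono hφK tendsto_natCast_atTop_atTop⟩

theorem ENNReal.tendsto_toReal_of_tendsto_ofReal {ι : Type*} {l : Filter ι} {x : ι → ℝ}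
    (hx : ∀ k, 0 ≤ x k) {s : ℝ≥0∞} (h : Tendsto (fun k => ENNReal.ofReal (x k)) l (𝓝 s))
    (hs : s ≠ ∞) : Tendsto x l (𝓝 s.toReal) :=
  ((ENNReal.tendsto_toReal hs).comp h).congr fun k => ENNReal.toReal_ofReal (hx k)

theorem exists_eq_top_of_tendsto_sum_sq_atTop {n : Type*} [Fintype n] {x : ℕ → n → ℝ}
    (hx : ∀ k i, 0 ≤ x k i) {s : n → ℝ≥0∞}
    (h : ∀ i, Tendsto (fun k => ENNReal.ofReal (x k i)) atTop (𝓝 (s i)))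
    (hsum : Tendsto (fun k => ∑ i, x k i ^ 2) atTop atTop) : ∃ i, s i = ∞ := by
  by_contra! hs
  exact not_tendsto_atTop_of_tendsto_nhds (tendsto_finsetSum _ fun i _ =>
    (ENNReal.tendsto_toReal_of_tendsto_ofReal (fun k => hx k i) (h i) (hs i)).pow 2) hsum

variable {n : Type*} [Fintype n] [DecidableEq n]

theorem Matrix.not_bddAbove_sum_singularValue_sq {M : ℕ → Matrix n n ℝ}
    (hM : ¬ ∃ C, ∀ k i j, |M k i j| ≤ C) :
    ¬ BddAbove (range fun k => ∑ i, (M k).singularValue i ^ 2) := by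
  rintro ⟨C, hC⟩
  refine hM ⟨√C, fun k i j => Real.abs_le_sqrt ?_⟩
  calc M k i j ^ 2 ≤ ∑ j, M k i j ^ 2 :=
        Finset.single_le_sum (f := fun j => M k i j ^ 2) (fun _ _ => sq_nonneg _)
          (Finset.mem_univ j)
    _ ≤ ∑ i, ∑ j, M k i j ^ 2 :=
        Finset.single_le_sum (f := fun i => ∑ j, M k i j ^ 2)
          (fun _ _ => Finset.sum_nonneg fun _ _ => sq_nonneg _) (Finset.mem_univ i)
    _ ≤ C := (sum_singularValue_sq (M k)).symm.trans_le (hC (mem_range_self k))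

theorem Matrix.exists_strictMono_tendsto_singularVectors {M : ℕ → Matrix n n ℝ}
    (hM : ∀ k, IsUnit (M k).det) :
    ∃ φ : ℕ → ℕ, StrictMono φ ∧ ∃ (s : n → ℝ≥0∞) (β α : n → n → ℝ), ∀ i,
      Tendsto (fun k => ENNReal.ofReal ((M (φ k)).singularValue i)) atTop (𝓝 (s i)) ∧
      Tendsto (fun k => (M (φ k)).rightSingularVector i) atTop (𝓝 (β i)) ∧
      Tendsto (fun k => (M (φ k)).leftSingularVector i) atTop (𝓝 (α i)) := by
  set x : ℕ → (n → ℝ≥0∞) × (n → n → ℝ) × (n → n → ℝ) := fun k =>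
    (fun i => ENNReal.ofReal ((M k).singularValue i), (M k).rightSingularVector,
      (M k).leftSingularVector)
  have hx : ∀ k, x k ∈ univ ×ˢ Metric.closedBall 0 1 := fun k => by
    refine ⟨mem_univ _, mem_closedBall_zero_iff.2 (max_le ?_ ?_)⟩ <;>
      refine (pi_norm_le_iff_of_nonneg zero_le_one).2 fun i => ?_ <;>
      refine norm_le_one_of_dotProduct_self_eq_one ?_
    · rw [rightSingularVector_dotProduct, if_pos rfl]
    · rw [leftSingularVector_dotProduct (hM k), if_pos rfl]
  obtain ⟨L, -, φ, hφ, hL⟩ :=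
    (isCompact_univ.prod (isCompact_closedBall _ _)).tendsto_subseq hx
  exact ⟨φ, hφ, L.1, L.2.1, L.2.2, fun i =>
    ⟨hL.fst_nhds.apply_nhds i, hL.snd_nhds.fst_nhds.apply_nhds i,
      hL.snd_nhds.snd_nhds.apply_nhds i⟩⟩

theorem Matrix.exists_strictMono_tendsto_singularVectors_of_unbounded {M : ℕ → Matrix n n ℝ}
    (hM : ∀ k, IsUnit (M k).det) (hunb : ¬ ∃ C, ∀ k i j, |M k i j| ≤ C) :
    ∃ φ : ℕ → ℕ, StrictMono φ ∧ ∃ (s : n → ℝ≥0∞) (β α : n → n → ℝ), (∃ i, s i = ∞) ∧ ∀ i,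
      Tendsto (fun k => ENNReal.ofReal ((M (φ k)).singularValue i)) atTop (𝓝 (s i)) ∧
      Tendsto (fun k => (M (φ k)).rightSingularVector i) atTop (𝓝 (β i)) ∧
      Tendsto (fun k => (M (φ k)).leftSingularVector i) atTop (𝓝 (α i)) := by
  obtain ⟨φ, hφ, hφtop⟩ :=
    exists_strictMono_tendsto_atTop_of_not_bddAbove (not_bddAbove_sum_singularValue_sq hunb)
  obtain ⟨ψ, hψ, s, β, α, hlim⟩ := exists_strictMono_tendsto_singularVectors fun k => hM (φ k)
  exact ⟨φ ∘ ψ, hφ.comp hψ, s, β, α, exists_eq_top_of_tendsto_sum_sq_atTop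
    (fun k => singularValue_nonneg _) (fun i => (hlim i).1) (hφtop.comp hψ.tendsto_atTop), hlim⟩

end Extraction

section Limits

variable {n : Type*} [Fintype n] [DecidableEq n] {N H G : ℕ → Matrix n n ℝ}
  {Hl Gl : Matrix n n ℝ} {β α : n → n → ℝ}

theorem dotProduct_mulVec_eq_zero_of_tendsto_singularValue_atTop
    (hrel : ∀ k, (N k)ᵀ * H k * N k = G k)
    (hH : Tendsto H atTop (𝓝 Hl)) (hG : Tendsto G atTop (𝓝 Gl))
    (hβ : ∀ i, Tendsto (fun k => (N k).rightSingularVector i) atTop (𝓝 (β i)))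
    (hα : ∀ i, Tendsto (fun k => (N k).leftSingularVector i) atTop (𝓝 (α i))) {i j : n}
    (hi : Tendsto (fun k => (N k).singularValue i) atTop atTop)
    (hj : Tendsto (fun k => (N k).singularValue j) atTop atTop) :
    α i ⬝ᵥ (Hl *ᵥ α j) = 0 := by
  have h : ∀ k, (N k).leftSingularVector i ⬝ᵥ (H k *ᵥ (N k).leftSingularVector j) =
      ((N k).singularValue i)⁻¹ * (((N k).singularValue j)⁻¹ *
        ((N k).rightSingularVector i ⬝ᵥ (G k *ᵥ (N k).rightSingularVector j))) := fun k => by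
    rw [leftSingularVector, leftSingularVector, smul_dotProduct, mulVec_smul, dotProduct_smul,
      dotProduct_mulVec_of_transpose_mul_mul_eq (hrel k), smul_eq_mul, smul_eq_mul]
  have hlim := hi.inv_tendsto_atTop.mul
    (hj.inv_tendsto_atTop.mul ((hβ i).dotProduct (hG.mulVec (hβ j))))
  exact tendsto_nhds_unique ((hα i).dotProduct (hH.mulVec (hα j)))
    (by simpa only [h, Pi.inv_apply, zero_mul] using hlim)

theorem exists_singularValue_tendsto_zero (hrel : ∀ k, (N k)ᵀ * H k * N k = G k)
    (hH : Tendsto H atTop (𝓝 Hl)) (hHl : Hl.det ≠ 0) (hG : Tendsto G atTop (𝓝 Gl)) {i₀ : n}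
    (hi₀ : Tendsto (fun k => (N k).singularValue i₀) atTop atTop) {s : n → ℝ}
    (hσ : ∀ i ≠ i₀, Tendsto (fun k => (N k).singularValue i) atTop (𝓝 (s i))) :
    ∃ j ≠ i₀, s j = 0 := by
  by_contra! hs
  have hpos : 0 < ∏ j ∈ Finset.univ.erase i₀, s j := Finset.prod_pos fun j hj =>
    (ge_of_tendsto' (hσ j (Finset.ne_of_mem_erase hj)) fun k => singularValue_nonneg _ j).lt_of_ne'
      (hs j (Finset.ne_of_mem_erase hj))
  have hdetN : Tendsto (fun k => |(N k).det|) atTop atTop := by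
    simp_rw [← prod_singularValue, ← Finset.mul_prod_erase _ _ (Finset.mem_univ i₀)]
    exact hi₀.atTop_mul_pos hpos
      (tendsto_finsetProd _ fun j hj => hσ j (Finset.ne_of_mem_erase hj))
  have hdetG : Tendsto (fun k => |(G k).det|) atTop atTop := by
    have e : ∀ k, |(G k).det| = |(N k).det| * |(N k).det| * |(H k).det| := fun k => by
      rw [← hrel k, det_mul, det_mul, det_transpose, abs_mul, abs_mul, mul_right_comm]
    simp_rw [e]
    exact (hdetN.atTop_mul_atTop₀ hdetN).atTop_mul_pos (abs_pos.2 hHl)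
      ((continuous_id.matrix_det.tendsto Hl).comp hH).abs
  exact not_tendsto_atTop_of_tendsto_nhds ((continuous_id.matrix_det.tendsto Gl).comp hG).abs
    hdetG

theorem exists_tendsto_mulVec_of_dotProduct_eq_zero (hN : ∀ k, IsUnit (N k).det) {i₀ : n}
    {s : n → ℝ} (hσ : ∀ i ≠ i₀, Tendsto (fun k => (N k).singularValue i) atTop (𝓝 (s i)))
    (hβ : ∀ i, Tendsto (fun k => (N k).rightSingularVector i) atTop (𝓝 (β i)))
    (hα : ∀ i, Tendsto (fun k => (N k).leftSingularVector i) atTop (𝓝 (α i)))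
    {v : n → ℝ} (hv : β i₀ ⬝ᵥ v = 0) :
    ∃ u : ℕ → n → ℝ, Tendsto u atTop (𝓝 v) ∧ ∃ y, Tendsto (fun k => N k *ᵥ u k) atTop (𝓝 y) := by
  set u : ℕ → n → ℝ := fun k => ∑ i ∈ Finset.univ.erase i₀,
    ((N k).rightSingularVector i ⬝ᵥ v) • (N k).rightSingularVector i
  have hu : ∀ k, u k = v - ((N k).rightSingularVector i₀ ⬝ᵥ v) • (N k).rightSingularVector i₀ :=
    fun k => eq_sub_of_add_eq' <| by
      have h := (N k).sum_rightSingularVector_dotProduct_smul v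
      rwa [← Finset.add_sum_erase _ _ (Finset.mem_univ i₀)] at h
  have hNu : ∀ k, N k *ᵥ u k = ∑ i ∈ Finset.univ.erase i₀,
      ((N k).rightSingularVector i ⬝ᵥ v * (N k).singularValue i) • (N k).leftSingularVector i :=
    fun k => by simp only [u, mulVec_sum, mulVec_smul, mulVec_rightSingularVector (hN k), smul_smul]
  refine ⟨u, ?_, ∑ i ∈ Finset.univ.erase i₀, (β i ⬝ᵥ v * s i) • α i,
    (tendsto_finsetSum _ fun i hi => ?_).congr fun k => (hNu k).symm⟩
  · have h := (tendsto_const_nhds (x := v)).sub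
      (((hβ i₀).dotProduct (tendsto_const_nhds (x := v))).smul (hβ i₀))
    rwa [hv, zero_smul, sub_zero, ← funext hu] at h
  · exact (((hβ i).dotProduct tendsto_const_nhds).mul (hσ i (Finset.ne_of_mem_erase hi))).smul
      (hα i)

theorem dotProduct_mulVec_eq_zero_of_singularValue_tendsto_zero (hN : ∀ k, IsUnit (N k).det)
    (hrel : ∀ k, (N k)ᵀ * H k * N k = G k) (hH : Tendsto H atTop (𝓝 Hl))
    (hG : Tendsto G atTop (𝓝 Gl)) {i₀ j₀ : n} {s : n → ℝ}
    (hσ : ∀ i ≠ i₀, Tendsto (fun k => (N k).singularValue i) atTop (𝓝 (s i)))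
    (hj₀ : j₀ ≠ i₀) (hsj₀ : s j₀ = 0)
    (hβ : ∀ i, Tendsto (fun k => (N k).rightSingularVector i) atTop (𝓝 (β i)))
    (hα : ∀ i, Tendsto (fun k => (N k).leftSingularVector i) atTop (𝓝 (α i)))
    {w : n → ℝ} (hw : β i₀ ⬝ᵥ w = 0) : β j₀ ⬝ᵥ (Gl *ᵥ w) = 0 := by
  obtain ⟨u, hu, y, hy⟩ := exists_tendsto_mulVec_of_dotProduct_eq_zero hN hσ hβ hα hw
  have h : ∀ k, (N k).rightSingularVector j₀ ⬝ᵥ (G k *ᵥ u k) =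
      (N k).singularValue j₀ * ((N k).leftSingularVector j₀ ⬝ᵥ (H k *ᵥ (N k *ᵥ u k))) :=
    fun k => by
      rw [← dotProduct_mulVec_of_transpose_mul_mul_eq (hrel k), mulVec_rightSingularVector (hN k),
        smul_dotProduct, smul_eq_mul]
  have hlim := (hσ j₀ hj₀).mul ((hα j₀).dotProduct (hH.mulVec hy))
  rw [hsj₀, zero_mul] at hlim
  exact tendsto_nhds_unique ((hβ j₀).dotProduct (hG.mulVec hu)) (by simpa only [h] using hlim)

end Limits

section Lorentz

theorem Matrix.eq_zero_of_dotProduct_diagonal_mulVec_self_eq_zero {n : Type*} [Fintype n]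
    [DecidableEq n] {d w : n → ℝ} {c : n} (hd : ∀ i ≠ c, 0 < d i) (hc : w c = 0)
    (hw : w ⬝ᵥ (diagonal d *ᵥ w) = 0) : w = 0 := by
  have hterm : ∀ i, 0 ≤ d i * (w i * w i) := fun i => by
    rcases eq_or_ne i c with rfl | hi
    · simp [hc]
    · exact mul_nonneg (hd i hi).le (mul_self_nonneg _)
  have hsum : ∑ i, d i * (w i * w i) = 0 := by
    rw [← hw]
    exact Finset.sum_congr rfl fun i _ => by rw [mulVec_diagonal]; ring
  funext i
  rcases eq_or_ne i c with rfl | hi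
  · exact hc
  · have h := (Finset.sum_eq_zero_iff_of_nonneg fun i _ => hterm i).1 hsum i (Finset.mem_univ i)
    exact mul_self_eq_zero.1 ((mul_eq_zero.1 h).resolve_left (hd i hi).ne')

theorem HasLorentzSignature.isSymm {m : ℕ} {H : Matrix (Fin m) (Fin m) ℝ}
    (hH : HasLorentzSignature m H) : H.IsSymm := by
  obtain ⟨P, -, rfl⟩ := hH
  simp [IsSymm, transpose_mul, Matrix.mul_assoc]

theorem HasLorentzSignature.det_ne_zero {m : ℕ} {H : Matrix (Fin m) (Fin m) ℝ}
    (hH : HasLorentzSignature m H) : H.det ≠ 0 := by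
  obtain ⟨P, hP, rfl⟩ := hH
  simp only [det_mul, det_transpose, det_diagonal]
  refine mul_ne_zero (mul_ne_zero hP.ne_zero (Finset.prod_ne_zero_iff.2 fun i _ => ?_)) hP.ne_zero
  split_ifs <;> norm_num

/-- A totally isotropic plane would meet the hyperplane where the last coordinate vanishes,
on which the form is positive definite. -/
theorem HasLorentzSignature.not_linearIndependent_of_isotropic {m : ℕ}
    {H : Matrix (Fin m) (Fin m) ℝ} (hH : HasLorentzSignature m H) {a b : Fin m → ℝ}
    (ha : a ⬝ᵥ (H *ᵥ a) = 0) (hb : b ⬝ᵥ (H *ᵥ b) = 0) (hab : a ⬝ᵥ (H *ᵥ b) = 0) :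
    ¬ LinearIndependent ℝ ![a, b] := by
  intro hli
  have hba : b ⬝ᵥ (H *ᵥ a) = 0 := by
    rw [dotProduct_mulVec, ← hH.isSymm.eq, vecMul_transpose, dotProduct_comm, hab]
  obtain ⟨P, hP, rfl⟩ := hH
  have hm : 0 < m := Nat.pos_of_ne_zero fun h => by
    subst h
    exact hli.ne_zero 0 (Subsingleton.elim _ _)
  set c : Fin m := ⟨m - 1, by omega⟩
  have hd : ∀ i ≠ c, 0 < (fun i : Fin m => if (i : ℕ) = m - 1 then (-1 : ℝ) else 1) i :=
    fun i hi => by simp [show (i : ℕ) ≠ m - 1 from fun h => hi (Fin.ext h)]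
  have hzero : ∀ s t : ℝ, (P *ᵥ (s • a + t • b)) c = 0 → s = 0 ∧ t = 0 := by
    refine fun s t hc => LinearIndependent.pair_iff.1 hli s t (eq_zero_of_mulVec_eq_zero hP.ne_zero
      (eq_zero_of_dotProduct_diagonal_mulVec_self_eq_zero hd hc ?_))
    rw [dotProduct_mulVec_of_transpose_mul_mul_eq rfl]
    simp only [mulVec_add, mulVec_smul, dotProduct_add, add_dotProduct, dotProduct_smul,
      smul_dotProduct, ha, hb, hab, hba, smul_zero, add_zero]
  have hac := (hzero ((P *ᵥ b) c) (-(P *ᵥ a) c)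
    (by simp [mulVec_add, mulVec_smul, neg_smul, mulVec_neg]; ring)).2
  exact one_ne_zero (hzero 1 0 (by simpa using hac)).1

theorem eq_of_tendsto_singularValue_atTop {m : ℕ} {N H G : ℕ → Matrix (Fin m) (Fin m) ℝ}
    {Hl Gl : Matrix (Fin m) (Fin m) ℝ} {β α : Fin m → Fin m → ℝ}
    (hN : ∀ k, IsUnit (N k).det) (hrel : ∀ k, (N k)ᵀ * H k * N k = G k)
    (hH : Tendsto H atTop (𝓝 Hl)) (hHl : HasLorentzSignature m Hl) (hG : Tendsto G atTop (𝓝 Gl))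
    (hβ : ∀ i, Tendsto (fun k => (N k).rightSingularVector i) atTop (𝓝 (β i)))
    (hα : ∀ i, Tendsto (fun k => (N k).leftSingularVector i) atTop (𝓝 (α i))) {i j : Fin m}
    (hi : Tendsto (fun k => (N k).singularValue i) atTop atTop)
    (hj : Tendsto (fun k => (N k).singularValue j) atTop atTop) : i = j := by
  by_contra hij
  have hαα : ∀ p q, α p ⬝ᵥ α q = if p = q then 1 else 0 := fun p q =>
    (hα p).dotProduct_eq_of_forall (hα q) fun k => leftSingularVector_dotProduct (hN k) p q
  have hiso := fun {p q} => dotProduct_mulVec_eq_zero_of_tendsto_singularValue_atTop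
    (Hl := Hl) hrel hH hG hβ hα (i := p) (j := q)
  refine hHl.not_linearIndependent_of_isotropic (hiso hi hi) (hiso hj hj) (hiso hi hj)
    (LinearIndependent.pair_iff.2 fun s t hst => ⟨?_, ?_⟩)
  · simpa [hαα, hij] using congrArg (α i ⬝ᵥ ·) hst
  · simpa [hαα, Ne.symm hij] using congrArg (α j ⬝ᵥ ·) hst

end Lorentz

section ApproxStable

variable {m : ℕ} {N : ℕ → Matrix (Fin m) (Fin m) ℝ}

theorem ApproxStable.dotProduct_eq_zero (hN : ∀ k, IsUnit (N k).det) {i : Fin m}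
    (hσ : Tendsto (fun k => (N k).singularValue i) atTop atTop) {b : Fin m → ℝ}
    (hβ : Tendsto (fun k => (N k).rightSingularVector i) atTop (𝓝 b)) {v : Fin m → ℝ}
    (hv : ApproxStable N v) : b ⬝ᵥ v = 0 := by
  obtain ⟨u, hu, C, hC⟩ := hv
  have h : ∀ k, (N k).rightSingularVector i ⬝ᵥ u k =
      ((N k).singularValue i)⁻¹ * ((N k).leftSingularVector i ⬝ᵥ (N k *ᵥ u k)) := fun k => by
    rw [leftSingularVector_dotProduct_mulVec (hN k),
      inv_mul_cancel_left₀ (singularValue_pos (hN k) i).ne']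
  have hbdd : IsBoundedUnder (· ≤ ·) atTop
      (norm ∘ fun k => (N k).leftSingularVector i ⬝ᵥ (N k *ᵥ u k)) :=
    isBoundedUnder_of ⟨m * (1 * C), fun k => by
      have ha : ‖(N k).leftSingularVector i‖ ≤ 1 := norm_le_one_of_dotProduct_self_eq_one
        (by rw [leftSingularVector_dotProduct (hN k), if_pos rfl])
      refine (abs_dotProduct_le _ _).trans ?_
      rw [Fintype.card_fin]
      exact mul_le_mul_of_nonneg_left (mul_le_mul ha (hC k) (norm_nonneg _) zero_le_one)
        (Nat.cast_nonneg m)⟩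
  have hlim := hσ.inv_tendsto_atTop.zero_mul_isBoundedUnder_le hbdd
  exact tendsto_nhds_unique (hβ.dotProduct hu) (by simpa only [h, Pi.inv_apply] using hlim)

theorem approxStable_of_dotProduct_eq_zero {β α : Fin m → Fin m → ℝ}
    (hN : ∀ k, IsUnit (N k).det) {i₀ : Fin m} {s : Fin m → ℝ}
    (hσ : ∀ i ≠ i₀, Tendsto (fun k => (N k).singularValue i) atTop (𝓝 (s i)))
    (hβ : ∀ i, Tendsto (fun k => (N k).rightSingularVector i) atTop (𝓝 (β i)))
    (hα : ∀ i, Tendsto (fun k => (N k).leftSingularVector i) atTop (𝓝 (α i)))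
    {v : Fin m → ℝ} (hv : β i₀ ⬝ᵥ v = 0) : ApproxStable N v := by
  obtain ⟨u, hu, y, hy⟩ := exists_tendsto_mulVec_of_dotProduct_eq_zero hN hσ hβ hα hv
  obtain ⟨C, hC⟩ := isBounded_iff_forall_norm_le.1 (Metric.isBounded_range_of_tendsto _ hy)
  exact ⟨u, hu, C, fun k => hC _ (mem_range_self k)⟩

end ApproxStable

theorem approxStable_eq_lightlikeHyperplane_general {m : ℕ}
    (H G : ℕ → Matrix (Fin m) (Fin m) ℝ) (Hl Gl : Matrix (Fin m) (Fin m) ℝ)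
    (hHlsig : HasLorentzSignature m Hl)
    (hHconv : Tendsto H atTop (𝓝 Hl)) (hGconv : Tendsto G atTop (𝓝 Gl))
    (M : ℕ → Matrix (Fin m) (Fin m) ℝ) (hMinv : ∀ n, IsUnit (M n).det)
    (hrel : ∀ n, (M n)ᵀ * H n * M n = G n)
    (hunb : ¬ ∃ C : ℝ, ∀ n i j, |M n i j| ≤ C) :
    ∃ φ : ℕ → ℕ, StrictMono φ ∧
      ∃ P : Submodule ℝ (Fin m → ℝ), LightlikeHyperplane Gl P ∧
        {v | ApproxStable (fun k => M (φ k)) v} = (P : Set (Fin m → ℝ)) := by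
  obtain ⟨φ, hφ, s, β, α, ⟨i₀, hi₀⟩, hlim⟩ :=
    exists_strictMono_tendsto_singularVectors_of_unbounded hMinv hunb
  have hN : ∀ k, IsUnit (M (φ k)).det := fun k => hMinv _
  have hrelN : ∀ k, (M (φ k))ᵀ * H (φ k) * M (φ k) = G (φ k) := fun k => hrel _
  have hH := hHconv.comp hφ.tendsto_atTop
  have hG := hGconv.comp hφ.tendsto_atTop
  have hβ := fun i => (hlim i).2.1
  have hα := fun i => (hlim i).2.2
  have hσtop : ∀ i, s i = ⊤ → Tendsto (fun k => (M (φ k)).singularValue i) atTop atTop :=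
    fun i hi => ENNReal.tendsto_ofReal_nhds_top.1 (hi ▸ (hlim i).1)
  have hσ : ∀ i ≠ i₀, Tendsto (fun k => (M (φ k)).singularValue i) atTop (𝓝 (s i).toReal) :=
    fun i hi => ENNReal.tendsto_toReal_of_tendsto_ofReal (fun k => singularValue_nonneg _ i)
      (hlim i).1 fun h => hi (eq_of_tendsto_singularValue_atTop hN hrelN hH hHlsig hG hβ hα
        (hσtop i h) (hσtop i₀ hi₀))
  obtain ⟨j₀, hj₀, hsj₀⟩ :=
    exists_singularValue_tendsto_zero hrelN hH hHlsig.det_ne_zero hG (hσtop i₀ hi₀) hσ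
  have hββ : ∀ i j, β i ⬝ᵥ β j = if i = j then 1 else 0 := fun i j =>
    (hβ i).dotProduct_eq_of_forall (hβ j) fun k => rightSingularVector_dotProduct _ i j
  have hβ_ne : ∀ i, β i ≠ 0 := fun i h => by simpa [h] using hββ i i
  refine ⟨φ, hφ, LinearMap.ker (dotProductEquiv ℝ (Fin m) (β i₀)),
    ⟨by simpa using finrank_ker_dotProductEquiv (hβ_ne i₀), β j₀, ?_, hβ_ne j₀, fun w hw => ?_⟩, ?_⟩
  · simp [hββ, hj₀.symm]
  · exact dotProduct_mulVec_eq_zero_of_singularValue_tendsto_zero hN hrelN hH hG hσ hj₀ hsj₀ hβ hα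
      (by simpa using hw)
  · ext v
    exact ⟨fun hv => by simpa using hv.dotProduct_eq_zero hN (hσtop i₀ hi₀) (hβ i₀),
      fun hv => approxStable_of_dotProduct_eq_zero hN hσ hβ hα (by simpa using hv)⟩

/-- Linear case of the main theorem: for an unbounded sequence of congruences between
convergent sequences of Lorentzian quadratic forms, along a subsequence the set of
approximately stable vectors is a lightlike hyperplane for the limit form `G`. -/
theorem approxStable_eq_lightlikeHyperplane {m : ℕ} (hm : 2 ≤ m)
    (H G : ℕ → Matrix (Fin m) (Fin m) ℝ) (Hl Gl : Matrix (Fin m) (Fin m) ℝ)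
    (hHsig : ∀ n, HasLorentzSignature m (H n)) (hGsig : ∀ n, HasLorentzSignature m (G n))
    (hHlsig : HasLorentzSignature m Hl) (hGlsig : HasLorentzSignature m Gl)
    (hHconv : Tendsto H atTop (𝓝 Hl)) (hGconv : Tendsto G atTop (𝓝 Gl))
    (M : ℕ → Matrix (Fin m) (Fin m) ℝ) (hMinv : ∀ n, IsUnit (M n).det)
    (hrel : ∀ n, (M n)ᵀ * H n * M n = G n)
    (hunb : ¬ ∃ C : ℝ, ∀ n i j, |M n i j| ≤ C) :
    ∃ φ : ℕ → ℕ, StrictMono φ ∧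
      ∃ P : Submodule ℝ (Fin m → ℝ), LightlikeHyperplane Gl P ∧
        {v | ApproxStable (fun k => M (φ k)) v} = (P : Set (Fin m → ℝ)) :=
  approxStable_eq_lightlikeHyperplane_general H G Hl Gl hHlsig hHconv hGconv M hMinv hrel hunb
end

section
/- Let m ≥ 2. Let (H_n) and (G_n) be sequences of real symmetric m×m matrices of signature (m−1,1) converging respectively to matrices H and G of signature (m−1,1), and let (M_n) be a sequence of invertible real m×m matrices with M_nᵀ H_n M_n = G_n for all n and sup_n ‖M_n‖ = ∞. Then there exist a strictly increasing map φ : ℕ → ℕ, a constant C > 0, and a sequence (P_k) of linear hyperplanes of ℝ^m such that for every k and every unit vector v ∈ P_k one has ‖M_{φ(k)} v‖ < C. -/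
open Matrix Filter Topology

/-- The Euclidean norm of a vector of `ℝ^m`. -/
noncomputable def euclNorm {m : ℕ} (v : Fin m → ℝ) : ℝ :=
  Real.sqrt (∑ i, v i ^ 2)

/-!
Let `u` be a top singular vector of `M n` and `v ⊥ u` a unit vector. Then `M n u ⊥ M n v` and
`‖M n v‖ ≤ ‖M n u‖`, so normalising `M n u` and `M n v` gives an orthonormal pair `e, f` on which
the quadratic form of `H n` and its polarisation are `O(‖M n v‖⁻²)`, because
`(M n)ᵀ H n (M n) = G n` stays bounded. A form of signature `(m - 1, 1)` is positive definite on a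
hyperplane, so it has no totally isotropic plane; by compactness of the set of orthonormal pairs
this holds uniformly for all forms near `Hl`. Hence `‖M n v‖` is bounded once `n` is large, and
`φ` only has to skip the first indices, with the hyperplanes `u⊥`.
-/

open Metric
open scoped RealInnerProductSpace

section IsotropyDefect

variable {E : Type*} [NormedAddCommGroup E] [InnerProductSpace ℝ E]

variable (E) in
def orthonormalPairs : Set (E × E) :=
  {p | ‖p.1‖ = 1 ∧ ‖p.2‖ = 1 ∧ ⟪p.1, p.2⟫ = 0}

/-- Vanishes exactly when the span of `e` and `f` is totally isotropic for the quadratic form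
`x ↦ ⟪x, A x⟫`. -/
def isotropyDefect (A : E →L[ℝ] E) (e f : E) : ℝ :=
  |⟪e, A e⟫| + |⟪f, A f⟫| + |⟪e, A f⟫ + ⟪f, A e⟫|

lemma isCompact_orthonormalPairs [FiniteDimensional ℝ E] : IsCompact (orthonormalPairs E) := by
  have : orthonormalPairs E = (sphere 0 1 ×ˢ sphere 0 1) ∩ {p | ⟪p.1, p.2⟫ = 0} := by
    ext
    simp [orthonormalPairs, and_assoc]
  rw [this]
  exact ((isCompact_sphere 0 1).prod (isCompact_sphere 0 1)).inter_right
    (isClosed_eq (by fun_prop) continuous_const)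

lemma linearIndependent_of_mem_orthonormalPairs {p : E × E} (hp : p ∈ orthonormalPairs E) :
    LinearIndependent ℝ ![p.1, p.2] := by
  obtain ⟨h1, h2, h12⟩ := hp
  refine LinearIndependent.pair_iff.mpr fun s t hst => ⟨?_, ?_⟩
  · simpa [inner_add_right, inner_smul_right, h12, real_inner_self_eq_norm_sq, h1] using
      congrArg (⟪p.1, ·⟫) hst
  · simpa [inner_add_right, inner_smul_right, real_inner_comm p.1 p.2, h12,
      real_inner_self_eq_norm_sq, h2] using congrArg (⟪p.2, ·⟫) hst

lemma continuous_isotropyDefect :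
    Continuous fun q : (E →L[ℝ] E) × E × E => isotropyDefect q.1 q.2.1 q.2.2 := by
  unfold isotropyDefect
  fun_prop

lemma isotropyDefect_smul (A : E →L[ℝ] E) (a b : ℝ) (x y : E) :
    isotropyDefect A (a • x) (b • y) =
      a ^ 2 * |⟪x, A x⟫| + b ^ 2 * |⟪y, A y⟫| + |a * b| * |⟪x, A y⟫ + ⟪y, A x⟫| := by
  simp only [isotropyDefect, map_smul, real_inner_smul_left, real_inner_smul_right]
  rw [← abs_mul, ← abs_of_nonneg (sq_nonneg a), ← abs_mul, ← abs_of_nonneg (sq_nonneg b), ← abs_mul]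
  ring_nf

lemma exists_pos_eventually_le_isotropyDefect [FiniteDimensional ℝ E] {A₀ : E →L[ℝ] E}
    (h : ∀ p ∈ orthonormalPairs E, 0 < isotropyDefect A₀ p.1 p.2) :
    ∃ δ > 0, ∀ᶠ A in 𝓝 A₀, ∀ p ∈ orthonormalPairs E, δ ≤ isotropyDefect A p.1 p.2 := by
  obtain ⟨δ, hδ, hle⟩ := isCompact_orthonormalPairs.exists_forall_le'
    (continuous_isotropyDefect.comp (continuous_const.prodMk continuous_id)).continuousOn h
  refine ⟨δ / 2, half_pos hδ,
    isCompact_orthonormalPairs.eventually_forall_of_forall_eventually fun p hp => ?_⟩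
  have : δ / 2 < isotropyDefect A₀ p.1 p.2 := (half_lt_self hδ).trans_le (hle p hp)
  exact (continuous_isotropyDefect.continuousAt.eventually (lt_mem_nhds this)).mono
    fun _ => le_of_lt

lemma isotropyDefect_pos_of_pos_on_ker {A : E →L[ℝ] E} (ℓ : E →ₗ[ℝ] ℝ)
    (hpos : ∀ w, w ≠ 0 → ℓ w = 0 → 0 < ⟪w, A w⟫) {x y : E}
    (hxy : LinearIndependent ℝ ![x, y]) : 0 < isotropyDefect A x y := by
  have hx : x ≠ 0 := by simpa using hxy.ne_zero 0
  rw [LinearIndependent.pair_iff] at hxy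
  by_contra hle
  obtain ⟨hxx, hyy, hxy'⟩ : ⟪x, A x⟫ = 0 ∧ ⟪y, A y⟫ = 0 ∧ ⟪x, A y⟫ + ⟪y, A x⟫ = 0 := by
    simp only [isotropyDefect, not_lt] at hle
    refine ⟨abs_eq_zero.mp ?_, abs_eq_zero.mp ?_, abs_eq_zero.mp ?_⟩ <;>
      linarith [abs_nonneg ⟪x, A x⟫, abs_nonneg ⟪y, A y⟫, abs_nonneg (⟪x, A y⟫ + ⟪y, A x⟫)]
  set z := ℓ y • x - ℓ x • y
  have hℓz : ℓ z = 0 := by simp only [z, map_sub, map_smul, smul_eq_mul]; ring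
  have hAz : ⟪z, A z⟫ = 0 := by
    simp only [z, map_sub, map_smul, inner_sub_left, inner_sub_right, real_inner_smul_left,
      real_inner_smul_right]
    linear_combination ℓ y ^ 2 * hxx - ℓ x * ℓ y * hxy' + ℓ x ^ 2 * hyy
  have hz0 : z = 0 := by
    by_contra hne
    exact (hpos z hne hℓz).ne' hAz
  obtain ⟨-, hℓx⟩ := hxy (ℓ y) (-ℓ x) (by rw [neg_smul, ← sub_eq_add_neg]; exact hz0)
  exact (hpos x hx (neg_eq_zero.mp hℓx)).ne' hxx

end IsotropyDefect

section SingularVector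

variable {E : Type*} [NormedAddCommGroup E] [InnerProductSpace ℝ E]

lemma ContinuousLinearMap.exists_topSingularVector [FiniteDimensional ℝ E] [Nontrivial E]
    (T : E →L[ℝ] E) : ∃ u, ‖u‖ = 1 ∧ ‖T u‖ = ‖T‖ ∧ ∀ v, ⟪u, v⟫ = 0 → ⟪T u, T v⟫ = 0 := by
  obtain ⟨u, hu, hmax⟩ := (isCompact_sphere (0 : E) 1).exists_isMaxOn
    (NormedSpace.sphere_nonempty.mpr zero_le_one)
    (by fun_prop : Continuous fun x => ‖T x‖).continuousOn
  have hu1 : ‖u‖ = 1 := by simpa using hu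
  refine ⟨u, hu1, ?_, fun v huv => ?_⟩
  · rw [← T.sSup_sphere_eq_norm]
    refine (IsGreatest.csSup_eq ⟨Set.mem_image_of_mem (fun x => ‖T x‖) hu, ?_⟩).symm
    rintro _ ⟨x, hx, rfl⟩
    exact hmax hx
  have hsq : ∀ x, (star T * T).reApplyInnerSelf x = ‖T x‖ ^ 2 := fun x => by
    simp [ContinuousLinearMap.reApplyInnerSelf, ContinuousLinearMap.star_eq_adjoint,
      T.apply_norm_sq_eq_inner_adjoint_left, real_inner_comm]
  have hmax' : IsMaxOn (star T * T).reApplyInnerSelf (sphere 0 ‖u‖) u := by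
    rw [hu1]
    intro x hx
    simpa only [Set.mem_ofPred_eq, hsq] using pow_le_pow_left₀ (norm_nonneg _) (hmax hx) 2
  -- `u` maximises the Rayleigh quotient of `T⋆T`, hence is one of its eigenvectors
  have heig := (IsSelfAdjoint.star_mul_self T).eq_smul_self_of_isLocalExtrOn_real
    (Or.inr hmax'.localize)
  calc ⟪T u, T v⟫ = ⟪(star T * T) u, v⟫ := by
        rw [ContinuousLinearMap.star_eq_adjoint, ← ContinuousLinearMap.adjoint_inner_left]; rfl
    _ = 0 := by rw [heig, real_inner_smul_left, huv, mul_zero]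

/-- The normalised images of `u` and `v` form an orthonormal pair whose defect is at most
`4 B / ‖T v‖²`. -/
lemma mul_sq_norm_apply_le_of_le_isotropyDefect {T A : E →L[ℝ] E} {u v : E} {δ B : ℝ}
    (hTu : ‖T u‖ = ‖T‖) (horth : ∀ w, ⟪u, w⟫ = 0 → ⟪T u, T w⟫ = 0)
    (hδ : ∀ p ∈ orthonormalPairs E, δ ≤ isotropyDefect A p.1 p.2)
    (hB : ∀ x y, ‖x‖ = 1 → ‖y‖ = 1 → |⟪T x, A (T y)⟫| ≤ B)
    (hu : ‖u‖ = 1) (hv : ‖v‖ = 1) (huv : ⟪u, v⟫ = 0) : δ * ‖T v‖ ^ 2 ≤ 4 * B := by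
  have hB0 : 0 ≤ B := (abs_nonneg _).trans (hB u u hu hu)
  rcases eq_or_ne (T v) 0 with hTv | hTv
  · simp [hTv, hB0]
  set α := ‖T u‖
  set β := ‖T v‖
  have hβ : 0 < β := norm_pos_iff.mpr hTv
  have hβα : β ≤ α := by simpa [hTu, hv] using T.le_opNorm v
  have hα : 0 < α := hβ.trans_le hβα
  have hmem : (α⁻¹ • T u, β⁻¹ • T v) ∈ orthonormalPairs E :=
    ⟨norm_smul_inv_norm (norm_pos_iff.mp hα), norm_smul_inv_norm hTv,
      by simp [real_inner_smul_left, real_inner_smul_right, horth v huv]⟩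
  have hdefect := (hδ _ hmem).trans_eq (isotropyDefect_smul A α⁻¹ β⁻¹ (T u) (T v))
  have hsum : |⟪T u, A (T v)⟫ + ⟪T v, A (T u)⟫| ≤ 2 * B := by
    linarith [abs_add_le ⟪T u, A (T v)⟫ ⟪T v, A (T u)⟫, hB u v hu hv, hB v u hv hu]
  have hαβ : |α⁻¹ * β⁻¹| ≤ β⁻¹ ^ 2 := by
    rw [abs_of_pos (by positivity), sq]
    gcongr
  rw [← le_div_iff₀ (by positivity)]
  calc δ ≤ _ := hdefect
    _ ≤ β⁻¹ ^ 2 * B + β⁻¹ ^ 2 * B + β⁻¹ ^ 2 * (2 * B) := by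
        gcongr
        exacts [hB u u hu hu, hB v v hv hv]
    _ = 4 * B / β ^ 2 := by field_simp; ring

end SingularVector

section Matrix

variable {m : ℕ}

lemma euclNorm_eq_norm (v : Fin m → ℝ) : euclNorm v = ‖WithLp.toLp 2 v‖ := by
  simp [euclNorm, EuclideanSpace.norm_eq]

lemma inner_toEuclideanCLM_transpose_mul_mul (M H : Matrix (Fin m) (Fin m) ℝ)
    (x y : EuclideanSpace ℝ (Fin m)) :
    ⟪x, toEuclideanCLM (𝕜 := ℝ) (Mᵀ * H * M) y⟫ =
      ⟪toEuclideanCLM (𝕜 := ℝ) M x, toEuclideanCLM (𝕜 := ℝ) H (toEuclideanCLM (𝕜 := ℝ) M y)⟫ := by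
  rw [inner_toEuclideanCLM, inner_toEuclideanCLM, ofLp_toEuclideanCLM, ofLp_toEuclideanCLM,
    Matrix.mulVec_mulVec, Matrix.dotProduct_mulVec, Matrix.dotProduct_mulVec,
    ← Matrix.vecMul_transpose, Matrix.vecMul_vecMul, Matrix.mul_assoc]

lemma toEuclideanCLM_injective_of_isUnit_det {P : Matrix (Fin m) (Fin m) ℝ} (hP : IsUnit P.det) :
    Function.Injective (toEuclideanCLM (𝕜 := ℝ) P) := fun x y hxy =>
  WithLp.ofLp_injective 2 <| Matrix.mulVec_injective_iff_isUnit.mpr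
    ((Matrix.isUnit_iff_isUnit_det P).mpr hP) <| by simpa using congrArg WithLp.ofLp hxy

lemma HasLorentzSignature.exists_pos_on_ker {H : Matrix (Fin m) (Fin m) ℝ} (hm : 0 < m)
    (hH : HasLorentzSignature m H) :
    ∃ ℓ : EuclideanSpace ℝ (Fin m) →ₗ[ℝ] ℝ,
      ∀ w, w ≠ 0 → ℓ w = 0 → 0 < ⟪w, toEuclideanCLM (𝕜 := ℝ) H w⟫ := by
  obtain ⟨P, hP, rfl⟩ := hH
  let i₀ : Fin m := ⟨m - 1, by omega⟩
  refine ⟨(EuclideanSpace.proj i₀).toLinearMap ∘ₗ (toEuclideanCLM (𝕜 := ℝ) P).toLinearMap,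
    fun w hw hℓ => ?_⟩
  set z := toEuclideanCLM (𝕜 := ℝ) P w
  have hz : z ≠ 0 := fun h =>
    hw (toEuclideanCLM_injective_of_isUnit_det hP (h.trans (map_zero _).symm))
  rw [inner_toEuclideanCLM_transpose_mul_mul, inner_toEuclideanCLM]
  have hzi₀ : z i₀ = 0 := hℓ
  calc 0 < ‖z‖ ^ 2 := by positivity
    _ = ∑ i, z i ^ 2 := EuclideanSpace.real_norm_sq_eq z
    _ = _ := by
        simp only [dotProduct, Matrix.mulVec_diagonal]
        refine Finset.sum_congr rfl fun i _ => ?_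
        split_ifs with hi
        · rw [show i = i₀ from Fin.ext hi, hzi₀]
          ring
        · ring

lemma finrank_map_orthogonal_span_singleton {u : EuclideanSpace ℝ (Fin m)} (hu : u ≠ 0) :
    Module.finrank ℝ ((ℝ ∙ u)ᗮ.map (WithLp.linearEquiv 2 ℝ (Fin m → ℝ)).toLinearMap) = m - 1 := by
  rw [LinearEquiv.finrank_map_eq]
  refine Submodule.finrank_add_finrank_orthogonal' ?_
  have hle := Submodule.finrank_le (ℝ ∙ u)
  rw [finrank_span_singleton hu, finrank_euclideanSpace_fin] at hle ⊢
  omega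

lemma mul_sq_euclNorm_mulVec_le {M H : Matrix (Fin m) (Fin m) ℝ} {u : EuclideanSpace ℝ (Fin m)}
    {v : Fin m → ℝ} {δ : ℝ}
    (hδ : ∀ p ∈ orthonormalPairs _, δ ≤ isotropyDefect (toEuclideanCLM (𝕜 := ℝ) H) p.1 p.2)
    (hu : ‖u‖ = 1) (hMu : ‖toEuclideanCLM (𝕜 := ℝ) M u‖ = ‖toEuclideanCLM (𝕜 := ℝ) M‖)
    (horth : ∀ w, ⟪u, w⟫ = 0 → ⟪toEuclideanCLM (𝕜 := ℝ) M u, toEuclideanCLM (𝕜 := ℝ) M w⟫ = 0)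
    (hv : euclNorm v = 1) (huv : WithLp.toLp 2 v ∈ (ℝ ∙ u)ᗮ) :
    δ * euclNorm (M *ᵥ v) ^ 2 ≤ 4 * ‖toEuclideanCLM (𝕜 := ℝ) (Mᵀ * H * M)‖ := by
  rw [euclNorm_eq_norm] at hv ⊢
  refine mul_sq_norm_apply_le_of_le_isotropyDefect hMu horth hδ (fun x y hx hy => ?_) hu hv
    (Submodule.mem_orthogonal_singleton_iff_inner_right.mp huv)
  rw [← inner_toEuclideanCLM_transpose_mul_mul]
  calc _ ≤ ‖x‖ * ‖toEuclideanCLM (𝕜 := ℝ) (Mᵀ * H * M) y‖ := abs_real_inner_le_norm _ _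
    _ ≤ _ := by simpa [hx, hy] using (toEuclideanCLM (𝕜 := ℝ) (Mᵀ * H * M)).le_opNorm y

end Matrix

theorem exists_uniformly_bounded_hyperplanes_general {m : ℕ} (hm : 2 ≤ m)
    (H G : ℕ → Matrix (Fin m) (Fin m) ℝ) (Hl Gl : Matrix (Fin m) (Fin m) ℝ)
    (hHlsig : HasLorentzSignature m Hl)
    (hHconv : Tendsto H atTop (𝓝 Hl)) (hGconv : Tendsto G atTop (𝓝 Gl))
    (M : ℕ → Matrix (Fin m) (Fin m) ℝ)
    (hrel : ∀ n, (M n)ᵀ * H n * M n = G n) :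
    ∃ φ : ℕ → ℕ, StrictMono φ ∧ ∃ C : ℝ, 0 < C ∧
      ∃ P : ℕ → Submodule ℝ (Fin m → ℝ),
        (∀ k, Module.finrank ℝ (P k) = m - 1) ∧
        ∀ k, ∀ v ∈ P k, euclNorm v = 1 → euclNorm ((M (φ k)) *ᵥ v) < C := by
  have : Nonempty (Fin m) := ⟨⟨0, by omega⟩⟩
  have hT : Continuous (toEuclideanCLM (n := Fin m) (𝕜 := ℝ)) :=
    (toEuclideanCLM (n := Fin m) (𝕜 := ℝ)).toAlgEquiv.toLinearMap.continuous_of_finiteDimensional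
  obtain ⟨ℓ, hℓ⟩ := hHlsig.exists_pos_on_ker (by omega)
  obtain ⟨δ, hδ, hδH⟩ := exists_pos_eventually_le_isotropyDefect fun p hp =>
    isotropyDefect_pos_of_pos_on_ker ℓ hℓ (linearIndependent_of_mem_orthonormalPairs hp)
  obtain ⟨N, hN⟩ := eventually_atTop.mp (((hT.tendsto Hl).comp hHconv).eventually hδH)
  obtain ⟨B, hB⟩ := ((hT.tendsto Gl).comp hGconv).norm.bddAbove_range
  choose u hu hMu horth using fun n => (toEuclideanCLM (𝕜 := ℝ) (M n)).exists_topSingularVector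
  refine ⟨(· + N), strictMono_id.add_const N, √(4 * B / δ) + 1, by positivity,
    fun k => (ℝ ∙ u (k + N))ᗮ.map (WithLp.linearEquiv 2 ℝ (Fin m → ℝ)).toLinearMap,
    fun k => finrank_map_orthogonal_span_singleton (norm_ne_zero_iff.mp (by simp [hu])),
    fun k v hv hv1 => ?_⟩
  have hbound := mul_sq_euclNorm_mulVec_le (hN (k + N) (by omega)) (hu _) (hMu _) (horth _) hv1
    ((Submodule.mem_map_equiv _).mp hv)
  rw [hrel] at hbound
  have hGB : ‖toEuclideanCLM (𝕜 := ℝ) (G (k + N))‖ ≤ B := hB ⟨k + N, rfl⟩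
  have hsq : euclNorm (M (k + N) *ᵥ v) ^ 2 ≤ 4 * B / δ := by
    rw [le_div_iff₀ hδ]
    linarith
  exact (le_abs_self _).trans (Real.abs_le_sqrt hsq) |>.trans_lt (lt_add_one _)

/-- Uniformity conclusion of the linear proposition: along a subsequence there are
hyperplanes `P k` on which the matrices `M (φ k)` are uniformly bounded: for every unit
vector `v ∈ P k`, `‖M (φ k) v‖ < C` (Euclidean norms). -/
theorem exists_uniformly_bounded_hyperplanes {m : ℕ} (hm : 2 ≤ m)
    (H G : ℕ → Matrix (Fin m) (Fin m) ℝ) (Hl Gl : Matrix (Fin m) (Fin m) ℝ)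
    (hHsig : ∀ n, HasLorentzSignature m (H n)) (hGsig : ∀ n, HasLorentzSignature m (G n))
    (hHlsig : HasLorentzSignature m Hl) (hGlsig : HasLorentzSignature m Gl)
    (hHconv : Tendsto H atTop (𝓝 Hl)) (hGconv : Tendsto G atTop (𝓝 Gl))
    (M : ℕ → Matrix (Fin m) (Fin m) ℝ) (hMinv : ∀ n, IsUnit (M n).det)
    (hrel : ∀ n, (M n)ᵀ * H n * M n = G n)
    (hunb : ¬ ∃ C : ℝ, ∀ n i j, |M n i j| ≤ C) :
    ∃ φ : ℕ → ℕ, StrictMono φ ∧ ∃ C : ℝ, 0 < C ∧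
      ∃ P : ℕ → Submodule ℝ (Fin m → ℝ),
        (∀ k, Module.finrank ℝ (P k) = m - 1) ∧
        ∀ k, ∀ v ∈ P k, euclNorm v = 1 → euclNorm ((M (φ k)) *ᵥ v) < C :=
  exists_uniformly_bounded_hyperplanes_general hm H G Hl Gl hHlsig hHconv hGconv M hrel
end

section
/- Let H be a real symmetric 2×2 matrix with det H < 0 (i.e., of signature (1,1)), and let (M_n) be a sequence of invertible real 2×2 matrices with sup_n ‖M_n‖ = ∞ such that the sequence (M_nᵀ H M_n) converges to an invertible matrix. Then there exists a sequence (I_n) of matrices satisfying I_nᵀ H I_n = H for all n such that the sequence (I_n^{-1} M_n) is bounded. -/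
/-!
Put `S n = (M n)ᵀ * H * M n`. It suffices to find `B n → B₀` with `(B n)ᵀ * H * B n = S n` for
large `n`: then `I n = M n * (B n)⁻¹` preserves `H` and `(I n)⁻¹ * M n = B n` is bounded.
As a limit of the `S n`, the form `L` has signature `(1,1)`, so `B₀ᵀ * H * B₀ = L` for some `B₀`
(both forms are congruent to `diag(1, -1)`). The square root `K n` of `L⁻¹ * S n` that tends to
`1` commutes with `L` in the sense `(K n)ᵀ * L = L * K n`, hence
`(K n)ᵀ * L * K n = L * (L⁻¹ * S n) = S n`, and `B n = B₀ * K n` works.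
-/

open Matrix Filter Topology

namespace Matrix

variable {n R : Type*} [Fintype n] [CommRing R]

theorem transpose_mul_mul_mul_assoc (A B C : Matrix n n R) :
    (A * B)ᵀ * C * (A * B) = Bᵀ * (Aᵀ * C * A) * B := by
  simp only [transpose_mul, Matrix.mul_assoc]

theorem exists_isometry_inv_mul_eq [DecidableEq n] {H M B : Matrix n n R} (hH : IsUnit H.det)
    (hM : IsUnit M.det) (h : Bᵀ * H * B = Mᵀ * H * M) :
    ∃ I : Matrix n n R, Iᵀ * H * I = H ∧ I⁻¹ * M = B := by
  have hB : IsUnit B.det := by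
    have hdet : IsUnit (Bᵀ * H * B).det := by
      rw [h, det_mul, det_mul, det_transpose]
      exact (hM.mul hH).mul hM
    rw [det_mul, det_mul, det_transpose] at hdet
    exact isUnit_of_mul_isUnit_left (isUnit_of_mul_isUnit_left hdet)
  refine ⟨M * B⁻¹, ?_, ?_⟩
  · rw [transpose_mul_mul_mul_assoc, ← h, ← transpose_mul_mul_mul_assoc, mul_nonsing_inv _ hB,
      transpose_one, Matrix.one_mul, Matrix.mul_one]
  · rw [mul_inv_rev, nonsing_inv_nonsing_inv _ hB, Matrix.mul_assoc, nonsing_inv_mul _ hM,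
      Matrix.mul_one]

omit [Fintype n] in
theorem IsSymm.of_tendsto {α ι : Type*} [TopologicalSpace α] [T2Space α] {l : Filter ι}
    [l.NeBot] {f : ι → Matrix n n α} {A : Matrix n n α} (hf : ∀ i, (f i).IsSymm)
    (h : Tendsto f l (𝓝 A)) : A.IsSymm :=
  tendsto_nhds_unique (((continuous_id.matrix_transpose.tendsto A).comp h).congr
    fun i => (hf i).eq) h

theorem exists_abs_apply_le_of_tendsto {m : Type*} [Fintype m] {f : ℕ → Matrix m n ℝ}
    {A : Matrix m n ℝ} (h : Tendsto f atTop (𝓝 A)) : ∃ C : ℝ, ∀ k i j, |f k i j| ≤ C := by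
  let := Matrix.normedAddCommGroup (m := m) (n := n) (α := ℝ)
  obtain ⟨C, hC⟩ := h.norm.bddAbove_range
  exact ⟨C, fun k i j => (norm_entry_le_entrywise_sup_norm (f k)).trans (hC ⟨k, rfl⟩)⟩

theorem mul_self_eq_trace_smul_sub_det_smul (A : Matrix (Fin 2) (Fin 2) R) :
    A * A = A.trace • A - A.det • 1 := by
  ext i j
  fin_cases i <;> fin_cases j <;>
    simp [mul_apply, Fin.sum_univ_two, trace_fin_two, det_fin_two] <;> ring

end Matrix

def minkowskiForm : Matrix (Fin 2) (Fin 2) ℝ := !![1, 0; 0, -1]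

theorem exists_transpose_mul_minkowskiForm_mul_eq {H : Matrix (Fin 2) (Fin 2) ℝ}
    (hH : H.IsSymm) (hdet : H.det < 0) :
    ∃ Q : Matrix (Fin 2) (Fin 2) ℝ, IsUnit Q.det ∧ Qᵀ * minkowskiForm * Q = H := by
  obtain ⟨a, b, c, rfl⟩ : ∃ a b c : ℝ, H = !![a, b; b, c] :=
    ⟨H 0 0, H 0 1, H 1 1, H.eta_fin_two.trans (by rw [hH.apply 0 1])⟩
  rw [det_fin_two_of] at hdet
  -- The form factors into real linear forms `ℓ * m`; the rows of `Q` are `(ℓ + m) / 2` and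
  -- `(ℓ - m) / 2`, with `ℓ = (0, 1), m = (2b, c)` if `a = 0` and
  -- `ℓ = (a, b + δ), m = (1, (b - δ) / a)` otherwise, where `δ² = b² - ac`.
  by_cases ha : a = 0
  · subst ha
    have hb : b ≠ 0 := by rintro rfl; simp at hdet
    refine ⟨!![b, (1 + c) / 2; -b, (1 - c) / 2], ?_, ?_⟩
    · rw [isUnit_iff_ne_zero, det_fin_two_of]
      ring_nf
      exact hb
    · ext i j
      fin_cases i <;> fin_cases j <;> simp [minkowskiForm, mul_apply, Fin.sum_univ_two] <;> ring
  · obtain ⟨δ, hδ, rfl⟩ : ∃ δ : ℝ, δ ≠ 0 ∧ c = (b ^ 2 - δ ^ 2) / a := by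
      refine ⟨√(b ^ 2 - a * c), (Real.sqrt_pos.2 (by nlinarith)).ne', ?_⟩
      rw [Real.sq_sqrt (by nlinarith)]
      field_simp
      ring
    refine ⟨!![(a + 1) / 2, (b + δ + (b - δ) / a) / 2; (a - 1) / 2, (b + δ - (b - δ) / a) / 2],
      ?_, ?_⟩
    · rw [isUnit_iff_ne_zero, det_fin_two_of]
      field_simp
      ring_nf
      simpa [ha] using hδ
    · ext i j
      fin_cases i <;> fin_cases j <;> simp [minkowskiForm, mul_apply, Fin.sum_univ_two] <;>
        field_simp <;> ring

theorem exists_transpose_mul_mul_eq_of_det_neg {H L : Matrix (Fin 2) (Fin 2) ℝ}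
    (hH : H.IsSymm) (hHdet : H.det < 0) (hL : L.IsSymm) (hLdet : L.det < 0) :
    ∃ B : Matrix (Fin 2) (Fin 2) ℝ, Bᵀ * H * B = L := by
  obtain ⟨P, hP, rfl⟩ := exists_transpose_mul_minkowskiForm_mul_eq hH hHdet
  obtain ⟨Q, -, rfl⟩ := exists_transpose_mul_minkowskiForm_mul_eq hL hLdet
  refine ⟨P⁻¹ * Q, ?_⟩
  rw [transpose_mul_mul_mul_assoc, ← transpose_mul_mul_mul_assoc P, mul_nonsing_inv _ hP,
    transpose_one, Matrix.one_mul, Matrix.mul_one]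

/-- The principal square root of a `2 × 2` matrix near `1`: by Cayley–Hamilton,
`(A + √(det A))² = (tr A + 2 √(det A)) • A`. -/
noncomputable def sqrtFinTwo (A : Matrix (Fin 2) (Fin 2) ℝ) : Matrix (Fin 2) (Fin 2) ℝ :=
  (√(A.trace + 2 * √A.det))⁻¹ • (A + √A.det • 1)

theorem sqrtFinTwo_mul_self {A : Matrix (Fin 2) (Fin 2) ℝ} (hdet : 0 ≤ A.det)
    (htr : 0 < A.trace + 2 * √A.det) : sqrtFinTwo A * sqrtFinTwo A = A := by
  have hsq : (A + √A.det • 1) * (A + √A.det • 1) = (A.trace + 2 * √A.det) • A := by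
    rw [add_mul, mul_add, mul_add, mul_self_eq_trace_smul_sub_det_smul, smul_mul_smul,
      Real.mul_self_sqrt hdet]
    simp only [Matrix.mul_one, Matrix.one_mul, Matrix.smul_mul, Matrix.mul_smul]
    module
  rw [sqrtFinTwo, smul_mul_smul, hsq, smul_smul, ← mul_inv, Real.mul_self_sqrt htr.le,
    inv_mul_cancel₀ htr.ne', one_smul]

theorem sqrtFinTwo_one : sqrtFinTwo 1 = 1 := by
  have h4 : √(4 : ℝ) = 2 := by
    rw [show (4 : ℝ) = 2 ^ 2 by norm_num, Real.sqrt_sq zero_le_two]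
  rw [sqrtFinTwo, trace_one, det_one, Real.sqrt_one, one_smul, ← two_smul ℝ, smul_smul]
  norm_num [h4]

theorem continuousAt_sqrtFinTwo_one : ContinuousAt sqrtFinTwo 1 := by
  unfold sqrtFinTwo
  fun_prop (disch := norm_num [trace_one])

theorem eventually_sqrtFinTwo_mul_self :
    ∀ᶠ A in 𝓝 (1 : Matrix (Fin 2) (Fin 2) ℝ), sqrtFinTwo A * sqrtFinTwo A = A := by
  have hdet : ∀ᶠ A in 𝓝 (1 : Matrix (Fin 2) (Fin 2) ℝ), 0 < A.det :=
    (continuous_id.matrix_det.tendsto 1).eventually (eventually_gt_nhds (by simp))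
  have htr : ∀ᶠ A in 𝓝 (1 : Matrix (Fin 2) (Fin 2) ℝ), 0 < A.trace + 2 * √A.det :=
    ((by fun_prop : Continuous fun A : Matrix (Fin 2) (Fin 2) ℝ => A.trace + 2 * √A.det).tendsto
      1).eventually (eventually_gt_nhds (by norm_num [trace_one]))
  filter_upwards [hdet, htr] with A hA hA' using sqrtFinTwo_mul_self hA.le hA'

theorem transpose_sqrtFinTwo_mul {A L : Matrix (Fin 2) (Fin 2) ℝ} (h : Aᵀ * L = L * A) :
    (sqrtFinTwo A)ᵀ * L = L * sqrtFinTwo A := by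
  simp only [sqrtFinTwo, transpose_smul, transpose_add, transpose_one, Matrix.smul_mul,
    Matrix.mul_smul, add_mul, mul_add, h, Matrix.one_mul, Matrix.mul_one]

theorem exists_tendsto_one_transpose_mul_mul_eq {ι : Type*} {l : Filter ι}
    {L : Matrix (Fin 2) (Fin 2) ℝ} (hL : L.IsSymm) (hLdet : IsUnit L.det)
    {S : ι → Matrix (Fin 2) (Fin 2) ℝ} (hS : ∀ i, (S i).IsSymm) (hSL : Tendsto S l (𝓝 L)) :
    ∃ K : ι → Matrix (Fin 2) (Fin 2) ℝ,
      Tendsto K l (𝓝 1) ∧ ∀ᶠ i in l, (K i)ᵀ * L * K i = S i := by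
  have hA : Tendsto (fun i => L⁻¹ * S i) l (𝓝 1) := by
    simpa [nonsing_inv_mul L hLdet] using hSL.const_mul L⁻¹
  refine ⟨fun i => sqrtFinTwo (L⁻¹ * S i), ?_, ?_⟩
  · exact sqrtFinTwo_one ▸ continuousAt_sqrtFinTwo_one.tendsto.comp hA
  filter_upwards [hA.eventually eventually_sqrtFinTwo_mul_self] with i hi
  have hcomm : (L⁻¹ * S i)ᵀ * L = L * (L⁻¹ * S i) := by
    rw [transpose_mul, transpose_nonsing_inv, hL.eq, (hS i).eq, Matrix.mul_assoc,
      nonsing_inv_mul _ hLdet, ← Matrix.mul_assoc, mul_nonsing_inv _ hLdet, Matrix.one_mul,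
      Matrix.mul_one]
  rw [transpose_sqrtFinTwo_mul hcomm, Matrix.mul_assoc, hi, ← Matrix.mul_assoc,
    mul_nonsing_inv _ hLdet, Matrix.one_mul]

theorem exists_isometries_bounded_quotient_general
    (H : Matrix (Fin 2) (Fin 2) ℝ) (hsymm : H.IsSymm) (hdet : H.det < 0)
    (M : ℕ → Matrix (Fin 2) (Fin 2) ℝ) (hMinv : ∀ n, IsUnit (M n).det)
    (L : Matrix (Fin 2) (Fin 2) ℝ) (hL : IsUnit L.det)
    (hconv : Tendsto (fun n => (M n)ᵀ * H * M n) atTop (𝓝 L)) :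
    ∃ I : ℕ → Matrix (Fin 2) (Fin 2) ℝ,
      (∀ n, (I n)ᵀ * H * I n = H) ∧
      ∃ C : ℝ, ∀ n i j, |((I n)⁻¹ * M n) i j| ≤ C := by
  have hS : ∀ n, ((M n)ᵀ * H * M n).IsSymm := fun n => by
    simp only [IsSymm, transpose_mul, transpose_transpose, hsymm.eq, Matrix.mul_assoc]
  have hLsymm : L.IsSymm := IsSymm.of_tendsto hS hconv
  have hLdet : L.det < 0 := by
    have hS_det : ∀ n, ((M n)ᵀ * H * M n).det ≤ 0 := fun n => by
      rw [det_mul, det_mul, det_transpose]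
      nlinarith [mul_self_nonneg (M n).det]
    exact (le_of_tendsto' ((continuous_id.matrix_det.tendsto L).comp hconv) hS_det).lt_of_ne
      hL.ne_zero
  obtain ⟨B₀, hB₀⟩ := exists_transpose_mul_mul_eq_of_det_neg hsymm hdet hLsymm hLdet
  obtain ⟨K, hK, hKL⟩ := exists_tendsto_one_transpose_mul_mul_eq hLsymm hL hS hconv
  obtain ⟨N, hN⟩ := eventually_atTop.1 hKL
  have hI : ∀ n, ∃ I : Matrix (Fin 2) (Fin 2) ℝ,
      Iᵀ * H * I = H ∧ (N ≤ n → I⁻¹ * M n = B₀ * K n) := fun n => by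
    by_cases hn : N ≤ n
    · obtain ⟨I, hIH, hIM⟩ := exists_isometry_inv_mul_eq (isUnit_iff_ne_zero.2 hdet.ne) (hMinv n)
        (by rw [transpose_mul_mul_mul_assoc, hB₀, hN n hn])
      exact ⟨I, hIH, fun _ => hIM⟩
    · exact ⟨1, by simp, fun h => absurd h hn⟩
  choose I hIH hIM using hI
  have hB : Tendsto (fun n => B₀ * K n) atTop (𝓝 B₀) := by simpa using hK.const_mul B₀
  exact ⟨I, hIH, exists_abs_apply_le_of_tendsto
    (hB.congr' (eventually_atTop.2 ⟨N, fun n hn => (hIM n hn).symm⟩))⟩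

/-- First part of Lemma 3.10: if `H` has signature `(1,1)` and `(M n)` is an unbounded
sequence of invertible matrices with `(M n)ᵀ * H * (M n)` converging to an invertible
matrix, then there is a sequence `(I n)` of linear isometries of `H` such that
`(I n)⁻¹ * M n` is bounded. -/
theorem exists_isometries_bounded_quotient
    (H : Matrix (Fin 2) (Fin 2) ℝ) (hsymm : H.IsSymm) (hdet : H.det < 0)
    (M : ℕ → Matrix (Fin 2) (Fin 2) ℝ) (hMinv : ∀ n, IsUnit (M n).det)
    (hunb : ¬ ∃ C : ℝ, ∀ n i j, |M n i j| ≤ C)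
    (L : Matrix (Fin 2) (Fin 2) ℝ) (hL : IsUnit L.det)
    (hconv : Tendsto (fun n => (M n)ᵀ * H * M n) atTop (𝓝 L)) :
    ∃ I : ℕ → Matrix (Fin 2) (Fin 2) ℝ,
      (∀ n, (I n)ᵀ * H * I n = H) ∧
      ∃ C : ℝ, ∀ n i j, |((I n)⁻¹ * M n) i j| ≤ C :=
  exists_isometries_bounded_quotient_general H hsymm hdet M hMinv L hL hconv
end

section
/- Let H be a real symmetric 2×2 matrix with det H < 0 (i.e., of signature (1,1)), and let (M_n) be a sequence of invertible real 2×2 matrices with sup_n ‖M_n‖ = ∞ such that the sequence (M_nᵀ H M_n) converges to an invertible matrix. Then there exist a nonzero vector v ∈ ℝ² with vᵀ H v = 0 and a strictly increasing map φ : ℕ → ℕ such that M_{φ(k)}^{-1} v → 0. -/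
/-!
Pick an `H`-isotropic pair `p, q` with `qᵀ H p = c ≠ 0`. Then `aₙ = Mₙ⁻¹ p` and `bₙ = Mₙ⁻¹ q`
form an isotropic pair for `Lₙ = Mₙᵀ H Mₙ` with the same pairing `c`, and for an isotropic pair
`x, y` of a symmetric `2 × 2` matrix `A` one has `|x|² |y|² = c² (tr A² - 4 det A) / (4 det A²)`.
As `Lₙ → L` with `L` invertible, `|aₙ|² |bₙ|²` stays bounded. On the other hand
`det Mₙ² = det Lₙ / det H` is bounded, so the unbounded `Mₙ` have unbounded inverses, and since
`p, q` is a basis, `|aₙ|² + |bₙ|²` is unbounded. Along a subsequence one of `|aₙ|`, `|bₙ|` blows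
up, and the other one tends to `0`.
-/

open Matrix Filter Topology
open Set
open scoped Matrix.Norms.Frobenius

namespace Matrix

section Congruence

variable {n k R : Type*} [Fintype n] [CommSemiring R]

theorem IsSymm.transpose_mul_mul {A : Matrix n n R} (hA : A.IsSymm) (M : Matrix n k R) :
    (Mᵀ * A * M).IsSymm := by
  simp only [IsSymm, transpose_mul, transpose_transpose, hA.eq, Matrix.mul_assoc]

theorem IsSymm.dotProduct_mulVec_comm {A : Matrix n n R} (hA : A.IsSymm) (x y : n → R) :
    y ⬝ᵥ A *ᵥ x = x ⬝ᵥ A *ᵥ y := by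
  rw [dotProduct_mulVec, ← vecMul_transpose, hA.eq, dotProduct_comm]

theorem dotProduct_transpose_mul_mul_mulVec [Fintype k] (M : Matrix n k R) (A : Matrix n n R)
    (x y : k → R) :
    x ⬝ᵥ (Mᵀ * A * M) *ᵥ y = (M *ᵥ x) ⬝ᵥ A *ᵥ (M *ᵥ y) := by
  rw [← mulVec_mulVec, ← mulVec_mulVec, dotProduct_mulVec, vecMul_transpose]

theorem of_mul_transpose {m : Type*} (v : m → n → R) (A : Matrix k n R) :
    of v * Aᵀ = of fun i => A *ᵥ v i := by
  ext i j
  simp only [mul_apply, of_apply, transpose_apply, mulVec, dotProduct, mul_comm]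

end Congruence

section IsotropicPair

variable {A : Matrix (Fin 2) (Fin 2) ℝ} {x y : Fin 2 → ℝ}

theorem det_of_sq_mul_det (A : Matrix (Fin 2) (Fin 2) ℝ) (x y : Fin 2 → ℝ) :
    (of ![x, y]).det ^ 2 * A.det =
      (x ⬝ᵥ A *ᵥ x) * (y ⬝ᵥ A *ᵥ y) - (x ⬝ᵥ A *ᵥ y) * (y ⬝ᵥ A *ᵥ x) := by
  simp only [det_fin_two, of_apply, cons_val_zero, cons_val_one, dotProduct, mulVec,
    Fin.sum_univ_two]
  ring

theorem det_of_sq_mul_trace (A : Matrix (Fin 2) (Fin 2) ℝ) (x y : Fin 2 → ℝ) :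
    (of ![x, y]).det ^ 2 * A.trace =
      (x ⬝ᵥ A *ᵥ x) * (y ⬝ᵥ y) + (y ⬝ᵥ A *ᵥ y) * (x ⬝ᵥ x)
        - (x ⬝ᵥ A *ᵥ y + y ⬝ᵥ A *ᵥ x) * (x ⬝ᵥ y) := by
  simp only [det_fin_two, of_apply, cons_val_zero, cons_val_one, trace_fin_two, dotProduct,
    mulVec, Fin.sum_univ_two]
  ring

theorem det_of_sq (x y : Fin 2 → ℝ) :
    (of ![x, y]).det ^ 2 = (x ⬝ᵥ x) * (y ⬝ᵥ y) - (x ⬝ᵥ y) ^ 2 := by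
  simp only [det_fin_two, of_apply, cons_val_zero, cons_val_one, dotProduct, Fin.sum_univ_two]
  ring

theorem IsSymm.det_of_sq_mul_det_of_isotropic (hA : A.IsSymm) (hx : x ⬝ᵥ A *ᵥ x = 0)
    (hy : y ⬝ᵥ A *ᵥ y = 0) : (of ![x, y]).det ^ 2 * A.det = -(y ⬝ᵥ A *ᵥ x) ^ 2 := by
  rw [det_of_sq_mul_det, hx, hy, ← hA.dotProduct_mulVec_comm]
  ring

theorem IsSymm.det_of_ne_zero_of_isotropic (hA : A.IsSymm) (hx : x ⬝ᵥ A *ᵥ x = 0)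
    (hy : y ⬝ᵥ A *ᵥ y = 0) (hxy : y ⬝ᵥ A *ᵥ x ≠ 0) : (of ![x, y]).det ≠ 0 := by
  intro h
  exact hxy (by simpa [h] using hA.det_of_sq_mul_det_of_isotropic hx hy)

theorem IsSymm.dotProduct_self_mul_of_isotropic (hA : A.IsSymm) (hx : x ⬝ᵥ A *ᵥ x = 0)
    (hy : y ⬝ᵥ A *ᵥ y = 0) (hxy : y ⬝ᵥ A *ᵥ x ≠ 0) :
    (x ⬝ᵥ x) * (y ⬝ᵥ y) = (y ⬝ᵥ A *ᵥ x) ^ 2 * (A.trace ^ 2 - 4 * A.det) / (4 * A.det ^ 2) := by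
  set c := y ⬝ᵥ A *ᵥ x
  set d := (of ![x, y]).det
  have hdet : d ^ 2 * A.det = -c ^ 2 := hA.det_of_sq_mul_det_of_isotropic hx hy
  have htrace : d ^ 2 * A.trace = -2 * c * (x ⬝ᵥ y) := by
    rw [det_of_sq_mul_trace, hx, hy, hA.dotProduct_mulVec_comm y x]
    ring
  have hd : d ≠ 0 := hA.det_of_ne_zero_of_isotropic hx hy hxy
  have hA0 : A.det ≠ 0 := fun h => hxy (by simpa [h] using hdet)
  rw [eq_div_iff (by positivity)]
  apply mul_left_cancel₀ (pow_ne_zero 4 hd)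
  linear_combination (4 * (x ⬝ᵥ x) * (y ⬝ᵥ y) * (d ^ 2 * A.det - c ^ 2) + 4 * c ^ 2 * d ^ 2) * hdet
    - c ^ 2 * (d ^ 2 * A.trace - 2 * c * (x ⬝ᵥ y)) * htrace - 4 * c ^ 4 * det_of_sq x y

theorem exists_isotropic_pair_of_det_neg (hA : A.IsSymm) (hdet : A.det < 0) :
    ∃ x y : Fin 2 → ℝ, x ⬝ᵥ A *ᵥ x = 0 ∧ y ⬝ᵥ A *ᵥ y = 0 ∧ y ⬝ᵥ A *ᵥ x ≠ 0 := by
  have h10 : A 1 0 = A 0 1 := hA.apply 0 1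
  rw [det_fin_two, h10] at hdet
  simp only [dotProduct, mulVec, Fin.sum_univ_two, h10]
  rcases eq_or_ne (A 0 0) 0 with h00 | h00
  · refine ⟨![1, 0], ![A 1 1, -2 * A 0 1], ?_, ?_, ?_⟩ <;>
      simp only [cons_val_zero, cons_val_one, cons_val_fin_one, h00]
    · ring
    · ring
    · intro h
      apply hdet.ne
      linear_combination h / 2 + A 1 1 * h00
  · -- the two roots of `t ↦ A 0 0 * t ^ 2 + 2 * A 0 1 * t + A 1 1`, homogenised
    obtain ⟨s, hs⟩ : ∃ s, s ^ 2 = A 0 1 ^ 2 - A 0 0 * A 1 1 :=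
      ⟨√(A 0 1 ^ 2 - A 0 0 * A 1 1), Real.sq_sqrt (by linarith)⟩
    refine ⟨![-A 0 1 + s, A 0 0], ![-A 0 1 - s, A 0 0], ?_, ?_, ?_⟩ <;>
      simp only [cons_val_zero, cons_val_one, cons_val_fin_one]
    · linear_combination A 0 0 * hs
    · linear_combination A 0 0 * hs
    · intro h
      apply mul_ne_zero (mul_ne_zero two_ne_zero h00) hdet.ne
      linear_combination h + A 0 0 * hs

end IsotropicPair

theorem frobenius_norm_sq_eq_sum_dotProduct {m n : Type*} [Fintype m] [Fintype n]
    (A : Matrix m n ℝ) : ‖A‖ ^ 2 = ∑ i, A i ⬝ᵥ A i := by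
  rw [frobenius_norm_def, ← Real.rpow_natCast, ← Real.rpow_mul (by positivity)]
  norm_num [dotProduct, Real.rpow_two, sq]

theorem norm_entry_le_frobenius_norm {m n α : Type*} [Fintype m] [Fintype n]
    [SeminormedAddCommGroup α] (A : Matrix m n α) (i : m) (j : n) : ‖A i j‖ ≤ ‖A‖ :=
  (PiLp.norm_apply_le (WithLp.toLp 2 (A i)) j).trans
    (PiLp.norm_apply_le (WithLp.toLp 2 fun i => WithLp.toLp 2 (A i)) i)

theorem frobenius_norm_adjugate_fin_two {α : Type*} [NormedCommRing α]
    (A : Matrix (Fin 2) (Fin 2) α) : ‖A.adjugate‖ = ‖A‖ := by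
  simp only [frobenius_norm_def, adjugate_fin_two, Fin.sum_univ_two, of_apply, cons_val_zero,
    cons_val_one, norm_neg]
  congr 1
  ring

theorem frobenius_norm_eq_norm_det_mul_norm_inv {𝕜 : Type*} [RCLike 𝕜]
    {A : Matrix (Fin 2) (Fin 2) 𝕜} (hA : IsUnit A.det) : ‖A‖ = ‖A.det‖ * ‖A⁻¹‖ := by
  rw [inv_def, norm_smul, frobenius_norm_adjugate_fin_two, Ring.inverse_eq_inv', norm_inv,
    mul_inv_cancel_left₀ (norm_ne_zero_iff.2 hA.ne_zero)]

theorem frobenius_norm_sq_le_of_inv_mulVec {M : Matrix (Fin 2) (Fin 2) ℝ} (hM : IsUnit M.det)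
    {x y : Fin 2 → ℝ} (hxy : IsUnit (of ![x, y]).det) :
    ‖M‖ ^ 2 ≤ (M.det * ‖(of ![x, y])⁻¹‖) ^ 2 *
      ((M⁻¹ *ᵥ x) ⬝ᵥ (M⁻¹ *ᵥ x) + (M⁻¹ *ᵥ y) ⬝ᵥ (M⁻¹ *ᵥ y)) := by
  set R := of ![x, y]
  have hrows : ‖R * M⁻¹ᵀ‖ ^ 2 = (M⁻¹ *ᵥ x) ⬝ᵥ (M⁻¹ *ᵥ x) + (M⁻¹ *ᵥ y) ⬝ᵥ (M⁻¹ *ᵥ y) := by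
    rw [of_mul_transpose, frobenius_norm_sq_eq_sum_dotProduct, Fin.sum_univ_two]
    rfl
  have hinv : ‖M⁻¹‖ ≤ ‖R⁻¹‖ * ‖R * M⁻¹ᵀ‖ :=
    calc ‖M⁻¹‖ = ‖R⁻¹ * (R * M⁻¹ᵀ)‖ := by
          rw [nonsing_inv_mul_cancel_left _ _ hxy, frobenius_norm_transpose]
      _ ≤ ‖R⁻¹‖ * ‖R * M⁻¹ᵀ‖ := frobenius_norm_mul _ _
  calc ‖M‖ ^ 2 = (|M.det| * ‖M⁻¹‖) ^ 2 := by
        rw [frobenius_norm_eq_norm_det_mul_norm_inv hM, Real.norm_eq_abs]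
    _ ≤ (|M.det| * (‖R⁻¹‖ * ‖R * M⁻¹ᵀ‖)) ^ 2 := by gcongr
    _ = _ := by
      rw [← hrows]
      simp only [mul_pow, sq_abs]
      ring

end Matrix

theorem exists_subseq_tendsto_zero_of_mul_le {F G : ℕ → ℝ} {C : ℝ} (hF : ∀ n, 0 ≤ F n)
    (hFG : ∀ n, F n * G n ≤ C) (hG : ¬BddAbove (range G)) :
    ∃ φ : ℕ → ℕ, StrictMono φ ∧ Tendsto (F ∘ φ) atTop (𝓝 0) := by
  have hfreq : ∀ k : ℕ, ∃ᶠ n in atTop, (k : ℝ) < G n := by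
    intro k
    by_contra h
    refine hG (isBoundedUnder_of_eventually_le (a := (k : ℝ)) ?_).bddAbove_range
    simpa using h
  obtain ⟨φ, hφ, hGφ⟩ := extraction_forall_of_frequently hfreq
  have hGφ_top : Tendsto (G ∘ φ) atTop atTop :=
    tendsto_atTop_mono (fun k => (hGφ k).le) tendsto_natCast_atTop_atTop
  refine ⟨φ, hφ, squeeze_zero' (.of_forall fun k => hF _) ?_
    ((tendsto_const_nhds (x := C)).div_atTop hGφ_top)⟩
  filter_upwards [hGφ_top.eventually_gt_atTop 0] with k hk
  exact (le_div_iff₀ hk).2 (hFG _)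

theorem exists_subseq_tendsto_zero_or {F G : ℕ → ℝ} (hF : ∀ n, 0 ≤ F n) (hG : ∀ n, 0 ≤ G n)
    (hFG : BddAbove (range fun n => F n * G n)) (hsum : ¬BddAbove (range fun n => F n + G n)) :
    ∃ φ : ℕ → ℕ, StrictMono φ ∧
      (Tendsto (F ∘ φ) atTop (𝓝 0) ∨ Tendsto (G ∘ φ) atTop (𝓝 0)) := by
  obtain ⟨C, hC⟩ := hFG
  by_cases hGb : BddAbove (range G)
  · have hFb : ¬BddAbove (range F) := by
      rintro ⟨a, ha⟩
      obtain ⟨b, hb⟩ := hGb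
      exact hsum ⟨a + b, by
        rintro _ ⟨n, rfl⟩
        exact add_le_add (ha ⟨n, rfl⟩) (hb ⟨n, rfl⟩)⟩
    obtain ⟨φ, hφ, h⟩ := exists_subseq_tendsto_zero_of_mul_le hG
      (fun n => (mul_comm _ _).trans_le (hC ⟨n, rfl⟩)) hFb
    exact ⟨φ, hφ, .inr h⟩
  · obtain ⟨φ, hφ, h⟩ := exists_subseq_tendsto_zero_of_mul_le hF (fun n => hC ⟨n, rfl⟩) hGb
    exact ⟨φ, hφ, .inl h⟩

theorem tendsto_zero_of_tendsto_dotProduct_self {α ι : Type*} [Fintype ι] {l : Filter α}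
    {x : α → ι → ℝ} (h : Tendsto (fun k => x k ⬝ᵥ x k) l (𝓝 0)) : Tendsto x l (𝓝 0) := by
  refine tendsto_pi_nhds.2 fun i => squeeze_zero_norm (fun k => ?_) (by simpa using h.sqrt)
  rw [Real.norm_eq_abs]
  refine Real.abs_le_sqrt ?_
  rw [sq]
  exact Finset.single_le_sum (f := fun j => x k j * x k j) (fun j _ => mul_self_nonneg _)
    (Finset.mem_univ i)

section Sequences

variable {H L : Matrix (Fin 2) (Fin 2) ℝ} {M : ℕ → Matrix (Fin 2) (Fin 2) ℝ}

theorem bddAbove_range_det_sq (hH : H.det ≠ 0)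
    (hconv : Tendsto (fun n => (M n)ᵀ * H * M n) atTop (𝓝 L)) :
    BddAbove (range fun n => (M n).det ^ 2) := by
  have hdet : (fun n => (M n).det ^ 2) = fun n => ((M n)ᵀ * H * M n).det / H.det := by
    ext n
    rw [det_mul, det_mul, det_transpose, eq_div_iff hH]
    ring
  rw [hdet]
  exact ((continuous_id.matrix_det.tendsto L).comp hconv).div_const _ |>.bddAbove_range

theorem bddAbove_range_inv_mulVec_dotProduct_self_mul (hH : H.IsSymm)
    (hM : ∀ n, IsUnit (M n).det) (hL : IsUnit L.det)
    (hconv : Tendsto (fun n => (M n)ᵀ * H * M n) atTop (𝓝 L)) {x y : Fin 2 → ℝ}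
    (hx : x ⬝ᵥ H *ᵥ x = 0) (hy : y ⬝ᵥ H *ᵥ y = 0) (hxy : y ⬝ᵥ H *ᵥ x ≠ 0) :
    BddAbove (range fun n =>
      ((M n)⁻¹ *ᵥ x ⬝ᵥ (M n)⁻¹ *ᵥ x) * ((M n)⁻¹ *ᵥ y ⬝ᵥ (M n)⁻¹ *ᵥ y)) := by
  let g : Matrix (Fin 2) (Fin 2) ℝ → ℝ := fun A =>
    (y ⬝ᵥ H *ᵥ x) ^ 2 * (A.trace ^ 2 - 4 * A.det) / (4 * A.det ^ 2)
  have hg : ContinuousAt g L := by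
    have := hL.ne_zero
    fun_prop (disch := positivity)
  suffices h : (fun n => ((M n)⁻¹ *ᵥ x ⬝ᵥ (M n)⁻¹ *ᵥ x) * ((M n)⁻¹ *ᵥ y ⬝ᵥ (M n)⁻¹ *ᵥ y))
      = g ∘ fun n => (M n)ᵀ * H * M n by
    rw [h]
    exact (hg.tendsto.comp hconv).bddAbove_range
  ext n
  have hform (u v : Fin 2 → ℝ) :
      (M n)⁻¹ *ᵥ u ⬝ᵥ ((M n)ᵀ * H * M n) *ᵥ ((M n)⁻¹ *ᵥ v) = u ⬝ᵥ H *ᵥ v := by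
    rw [dotProduct_transpose_mul_mul_mulVec]
    simp only [mulVec_mulVec, mul_nonsing_inv _ (hM n), one_mulVec]
  have hprod := (hH.transpose_mul_mul (M n)).dotProduct_self_mul_of_isotropic
    (by rw [hform, hx]) (by rw [hform, hy]) (by rwa [hform])
  rwa [hform] at hprod

theorem not_bddAbove_range_inv_mulVec_dotProduct_self_add (hM : ∀ n, IsUnit (M n).det)
    (hunb : ¬ ∃ C : ℝ, ∀ n i j, |M n i j| ≤ C) (hdet : BddAbove (range fun n => (M n).det ^ 2))
    {x y : Fin 2 → ℝ} (hxy : IsUnit (of ![x, y]).det) :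
    ¬BddAbove (range fun n => (M n)⁻¹ *ᵥ x ⬝ᵥ (M n)⁻¹ *ᵥ x + (M n)⁻¹ *ᵥ y ⬝ᵥ (M n)⁻¹ *ᵥ y) := by
  rintro ⟨S, hS⟩
  obtain ⟨D, hD⟩ := hdet
  refine hunb ⟨√(D * ‖(of ![x, y])⁻¹‖ ^ 2 * S), fun n i j => Real.abs_le_sqrt ?_⟩
  calc M n i j ^ 2 ≤ ‖M n‖ ^ 2 := by
        rw [← sq_abs, ← Real.norm_eq_abs]
        gcongr
        exact norm_entry_le_frobenius_norm _ i j
    _ ≤ ((M n).det * ‖(of ![x, y])⁻¹‖) ^ 2 *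
        ((M n)⁻¹ *ᵥ x ⬝ᵥ (M n)⁻¹ *ᵥ x + (M n)⁻¹ *ᵥ y ⬝ᵥ (M n)⁻¹ *ᵥ y) :=
      frobenius_norm_sq_le_of_inv_mulVec (hM n) hxy
    _ ≤ D * ‖(of ![x, y])⁻¹‖ ^ 2 * S := by
      rw [mul_pow]
      gcongr
      · exact add_nonneg (dotProduct_self_star_nonneg _) (dotProduct_self_star_nonneg _)
      · exact mul_nonneg ((sq_nonneg _).trans (hD ⟨0, rfl⟩)) (sq_nonneg _)
      · exact hD ⟨n, rfl⟩
      · exact hS ⟨n, rfl⟩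

end Sequences

/-- Second part of Lemma 3.10: if `H` has signature `(1,1)` and `(M n)` is an unbounded
sequence of invertible matrices with `(M n)ᵀ * H * (M n)` converging to an invertible
matrix, then there is an `H`-lightlike vector `v ≠ 0` with `(M (φ k))⁻¹ *ᵥ v → 0` along
some subsequence. -/
theorem exists_lightlike_contracted_by_inverse
    (H : Matrix (Fin 2) (Fin 2) ℝ) (hsymm : H.IsSymm) (hdet : H.det < 0)
    (M : ℕ → Matrix (Fin 2) (Fin 2) ℝ) (hMinv : ∀ n, IsUnit (M n).det)
    (hunb : ¬ ∃ C : ℝ, ∀ n i j, |M n i j| ≤ C)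
    (L : Matrix (Fin 2) (Fin 2) ℝ) (hL : IsUnit L.det)
    (hconv : Tendsto (fun n => (M n)ᵀ * H * M n) atTop (𝓝 L)) :
    ∃ v : Fin 2 → ℝ, v ≠ 0 ∧ v ⬝ᵥ (H *ᵥ v) = 0 ∧
      ∃ φ : ℕ → ℕ, StrictMono φ ∧
        Tendsto (fun k => (M (φ k))⁻¹ *ᵥ v) atTop (𝓝 0) := by
  obtain ⟨p, q, hp, hq, hqp⟩ := exists_isotropic_pair_of_det_neg hsymm hdet
  have hpq : IsUnit (of ![p, q]).det := (hsymm.det_of_ne_zero_of_isotropic hp hq hqp).isUnit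
  obtain ⟨φ, hφ, hφp | hφq⟩ := exists_subseq_tendsto_zero_or
    (fun n => dotProduct_self_star_nonneg _) (fun n => dotProduct_self_star_nonneg _)
    (bddAbove_range_inv_mulVec_dotProduct_self_mul hsymm hMinv hL hconv hp hq hqp)
    (not_bddAbove_range_inv_mulVec_dotProduct_self_add hMinv hunb
      (bddAbove_range_det_sq hdet.ne hconv) hpq)
  · refine ⟨p, ?_, hp, φ, hφ, tendsto_zero_of_tendsto_dotProduct_self hφp⟩
    rintro rfl
    simp at hqp
  · refine ⟨q, ?_, hq, φ, hφ, tendsto_zero_of_tendsto_dotProduct_self hφq⟩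
    rintro rfl
    simp at hqp
end

section
/- Let H be a real symmetric 2×2 matrix with det H < 0 (signature (1,1)) such that every nonzero vector v ∈ ℝ² with vᵀ H v = 0 is a real scalar multiple of a nonzero vector with rational coordinates (i.e., both lightlike lines of H are rational). Then every sequence (M_n) of 2×2 integer matrices of determinant ±1 such that the sequence (M_nᵀ H M_n) converges to an invertible matrix is bounded. -/
/-!
Both lightlike lines of `H` being rational, there is an integer matrix `U` with `det U = δ ≠ 0`
whose columns are lightlike, so that `Uᵀ H U = β • J` with `J = !![0, 1; 1, 0]` and `β ≠ 0`.
For the integer matrices `A = adj U * M`, of determinant `±δ`, this gives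
`δ² • Mᵀ H M = β • Aᵀ J A`. Convergence therefore bounds the integers
`A 0 i * A 1 j + A 1 i * A 0 j`, hence, together with `det A`, all products `A 0 i * A 1 j`.
Neither row of `A` vanishes, so integrality bounds every entry of `A`, and then of `δ • M = U * A`.
-/

open Matrix Filter Topology

namespace Matrix

section CommRing

variable {n R : Type*} [Fintype n] [DecidableEq n] [CommRing R]

theorem adjugate_mul_transpose_mul_mul_eq (P H M : Matrix n n R) :
    (P.adjugate * M)ᵀ * (Pᵀ * H * P) * (P.adjugate * M) = P.det ^ 2 • (Mᵀ * H * M) := by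
  have hP : (P * P.adjugate)ᵀ = P.det • 1 := by
    rw [mul_adjugate, transpose_smul, transpose_one]
  calc (P.adjugate * M)ᵀ * (Pᵀ * H * P) * (P.adjugate * M)
      = Mᵀ * (P * P.adjugate)ᵀ * H * (P * P.adjugate) * M := by
        simp only [transpose_mul, Matrix.mul_assoc]
    _ = P.det ^ 2 • (Mᵀ * H * M) := by
        rw [hP, mul_adjugate]
        simp only [Matrix.mul_smul, Matrix.smul_mul, Matrix.mul_one, smul_smul, pow_two]

variable (R) in
def hyperbolicGram : Matrix (Fin 2) (Fin 2) R := !![0, 1; 1, 0]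

theorem map_hyperbolicGram {S : Type*} [CommRing S] (f : R →+* S) :
    (hyperbolicGram R).map f = hyperbolicGram S := by
  ext i j
  fin_cases i <;> fin_cases j <;> simp [hyperbolicGram]

theorem eq_smul_of_isSymm_of_diag_eq_zero {K : Matrix (Fin 2) (Fin 2) R} (hK : K.IsSymm)
    (hdiag : ∀ i, K i i = 0) : K = K 0 1 • hyperbolicGram R := by
  ext i j
  fin_cases i <;> fin_cases j <;> simp [hyperbolicGram, hdiag, hK.apply 0 1]

theorem transpose_mul_hyperbolicGram_mul_apply (A : Matrix (Fin 2) (Fin 2) R) (i j : Fin 2) :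
    (Aᵀ * hyperbolicGram R * A) i j = A 0 i * A 1 j + A 1 i * A 0 j := by
  simp only [hyperbolicGram, mul_apply, transpose_apply, of_apply, cons_val', cons_val_fin_one,
    Fin.sum_univ_two, Fin.isValue, cons_val_zero, cons_val_one, mul_zero, mul_one, zero_add, add_zero]
  ring

end CommRing

theorem det_sq_div_smul_transpose_mul_mul_eq {n : Type*} [Fintype n] [DecidableEq n]
    {H : Matrix n n ℝ} {U J : Matrix n n ℤ} {β : ℝ} (hβ : β ≠ 0)
    (hU : (U.map (Int.cast : ℤ → ℝ))ᵀ * H * U.map Int.cast = β • J.map Int.cast)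
    (M : Matrix n n ℤ) :
    ((U.det : ℝ) ^ 2 / β) • ((M.map (Int.cast : ℤ → ℝ))ᵀ * H * M.map Int.cast)
      = ((U.adjugate * M)ᵀ * J * (U.adjugate * M)).map Int.cast := by
  have cast_mul : ∀ A B : Matrix n n ℤ,
      (A * B).map (Int.cast : ℤ → ℝ) = A.map Int.cast * B.map Int.cast :=
    fun _ _ => Matrix.map_mul (f := Int.castRingHom ℝ)
  have cast_adjugate : (U.map (Int.cast : ℤ → ℝ)).adjugate = U.adjugate.map Int.cast :=
    ((Int.castRingHom ℝ).map_adjugate U).symm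
  calc ((U.det : ℝ) ^ 2 / β) • ((M.map (Int.cast : ℤ → ℝ))ᵀ * H * M.map Int.cast)
      = β⁻¹ • ((U.map (Int.cast : ℤ → ℝ)).det ^ 2 •
          ((M.map (Int.cast : ℤ → ℝ))ᵀ * H * M.map Int.cast)) := by
        rw [smul_smul, Int.cast_det, div_eq_inv_mul]
    _ = ((U.adjugate * M)ᵀ * J * (U.adjugate * M)).map Int.cast := by
        rw [← adjugate_mul_transpose_mul_mul_eq, hU, Matrix.mul_smul, Matrix.smul_mul, smul_smul,
          inv_mul_cancel₀ hβ, one_smul, cast_adjugate, cast_mul, cast_mul, cast_mul, transpose_map,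
          cast_mul]

theorem abs_mul_apply_le {l m n α : Type*} [Fintype m] [Ring α] [LinearOrder α]
    [IsStrictOrderedRing α]
    {P : Matrix l m α} {A : Matrix m n α} {p a : α} (hP : ∀ i k, |P i k| ≤ p)
    (hA : ∀ k j, |A k j| ≤ a) (i : l) (j : n) :
    |(P * A) i j| ≤ Fintype.card m * (p * a) := by
  calc |(P * A) i j| ≤ ∑ k, |P i k * A k j| := Finset.abs_sum_le_sum_abs _ _
    _ ≤ ∑ _k : m, p * a := Finset.sum_le_sum fun k _ => by
        rw [abs_mul]
        exact mul_le_mul (hP i k) (hA k j) (abs_nonneg _) ((abs_nonneg _).trans (hP i k))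
    _ = Fintype.card m * (p * a) := by simp

theorem abs_apply_le_of_abs_mul_le {A : Matrix (Fin 2) (Fin 2) ℤ} {C : ℤ} (hA : A.det ≠ 0)
    (h : ∀ i j, |A 0 i * A 1 j| ≤ C) (i j : Fin 2) : |A i j| ≤ C := by
  have abs_le_abs_mul : ∀ x y : ℤ, y ≠ 0 → |x| ≤ |x * y| := fun x y hy => by
    rw [abs_mul]; exact le_mul_of_one_le_right (abs_nonneg x) (Int.one_le_abs hy)
  have row_ne_zero : ∀ r, ∃ k, A r k ≠ 0 := by
    by_contra! h0
    obtain ⟨r, hr⟩ := h0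
    apply hA
    fin_cases r <;> simp only [Fin.zero_eta, Fin.mk_one] at hr <;> simp [det_fin_two, hr]
  fin_cases i
  · obtain ⟨k, hk⟩ := row_ne_zero 1
    exact (abs_le_abs_mul _ _ hk).trans (h j k)
  · obtain ⟨k, hk⟩ := row_ne_zero 0
    exact (abs_le_abs_mul _ _ hk).trans (mul_comm (A 0 k) (A 1 j) ▸ h k j)

theorem abs_mul_le_of_hyperbolicGram {A : Matrix (Fin 2) (Fin 2) ℤ} {C : ℤ}
    (h : ∀ i j, |(Aᵀ * hyperbolicGram ℤ * A) i j| ≤ C) (i j : Fin 2) :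
    |A 0 i * A 1 j| ≤ C + |A.det| := by
  have hd := abs_le.1 (le_refl |A.det|)
  rw [det_fin_two] at hd
  have hC := fun i j => abs_le.1 (h i j)
  simp only [transpose_mul_hyperbolicGram_mul_apply] at hC
  obtain ⟨h00, h00'⟩ := hC 0 0
  obtain ⟨h01, h01'⟩ := hC 0 1
  obtain ⟨h11, h11'⟩ := hC 1 1
  rw [abs_le, det_fin_two]
  fin_cases i <;> fin_cases j <;> simp only [Fin.zero_eta, Fin.mk_one, Fin.isValue] <;>
    constructor <;> linarith

theorem exists_abs_le_of_tendsto_map_intCast {m n : Type*} [Fintype m] [Fintype n]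
    {B : ℕ → Matrix m n ℤ} {L : Matrix m n ℝ}
    (h : Tendsto (fun k => (B k).map (Int.cast : ℤ → ℝ)) atTop (𝓝 L)) :
    ∃ C : ℤ, ∀ k i j, |B k i j| ≤ C := by
  let _ := Matrix.normedAddCommGroup (m := m) (n := n) (α := ℝ)
  obtain ⟨C, hC⟩ := isBounded_iff_forall_norm_le.1 (Metric.isBounded_range_of_tendsto _ h)
  refine ⟨⌈C⌉, fun k i j => ?_⟩
  have hk : |(B k i j : ℝ)| ≤ C :=
    (norm_entry_le_entrywise_sup_norm _).trans (hC _ ⟨k, rfl⟩)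
  exact_mod_cast hk.trans (Int.le_ceil C)

theorem exists_abs_le_of_adjugate_mul {n : Type*} [Fintype n] [DecidableEq n]
    {P : Matrix n n ℤ} (hP : P.det ≠ 0) {M : ℕ → Matrix n n ℤ} {C : ℤ}
    (h : ∀ k i j, |(P.adjugate * M k) i j| ≤ C) :
    ∃ C' : ℤ, ∀ k i j, |M k i j| ≤ C' := by
  obtain ⟨p, hp⟩ := Finite.exists_le fun ik : n × n => |P ik.1 ik.2|
  refine ⟨Fintype.card n * (p * C), fun k i j => ?_⟩
  have hPM : P * (P.adjugate * M k) = P.det • M k := by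
    rw [← Matrix.mul_assoc, mul_adjugate, Matrix.smul_mul, Matrix.one_mul]
  calc |M k i j| ≤ |P.det * M k i j| := by
        rw [abs_mul]; exact le_mul_of_one_le_left (abs_nonneg _) (Int.one_le_abs hP)
    _ = |(P * (P.adjugate * M k)) i j| := by rw [hPM, smul_apply, smul_eq_mul]
    _ ≤ Fintype.card n * (p * C) := abs_mul_apply_le (fun i k => hp (i, k)) (h k) i j

end Matrix

theorem exists_int_smul_eq_of_eq_smul_ratCast {ι : Type*} [Finite ι] {v : ι → ℝ} {c : ℝ}
    {w : ι → ℚ} (hv : v = c • fun i => (w i : ℝ)) (hv0 : v ≠ 0) :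
    ∃ (u : ι → ℤ) (t : ℝ), t ≠ 0 ∧ (fun i => (u i : ℝ)) = t • v := by
  obtain ⟨b, hb⟩ := IsLocalization.exist_integer_multiples_of_finite (nonZeroDivisors ℤ) w
  choose u hu using hb
  have hc : c ≠ 0 := by rintro rfl; exact hv0 (by rw [hv, zero_smul])
  have hb0 : ((b : ℤ) : ℝ) ≠ 0 := Int.cast_ne_zero.2 (nonZeroDivisors.coe_ne_zero b)
  refine ⟨u, (b : ℤ) / c, div_ne_zero hb0 hc, funext fun i => ?_⟩
  have hui : (u i : ℝ) = (b : ℤ) * (w i : ℝ) := by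
    exact_mod_cast congrArg (Rat.cast : ℚ → ℝ) ((hu i).trans (zsmul_eq_mul _ _))
  rw [hui, hv]
  simp only [Pi.smul_apply, smul_eq_mul]
  field_simp

theorem exists_isotropic_basis_of_det_neg {H : Matrix (Fin 2) (Fin 2) ℝ} (hH : H.IsSymm)
    (hdet : H.det < 0) :
    ∃ P : Matrix (Fin 2) (Fin 2) ℝ, P.det ≠ 0 ∧ ∀ i, (Pᵀ * H * P) i i = 0 := by
  set a := H 0 0
  set b := H 0 1
  set c := H 1 1
  have hdisc : 0 < b ^ 2 - a * c := by
    rw [det_fin_two, hH.apply 0 1] at hdet; linarith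
  set s := √(b ^ 2 - a * c)
  have hs : s ^ 2 = b ^ 2 - a * c := Real.sq_sqrt hdisc.le
  have hs0 : 0 < s := Real.sqrt_pos.2 hdisc
  -- for a root `r` of `r ^ 2 - 2 b r + a c`, both columns of `!![-r, c; a, -r]` are isotropic
  obtain ⟨r, hr, hr0, hrb⟩ : ∃ r, r ^ 2 - 2 * b * r + a * c = 0 ∧ r ≠ 0 ∧ r ≠ b := by
    by_cases hbs : b + s = 0
    · exact ⟨b - s, by linear_combination hs, by linarith, by linarith⟩
    · exact ⟨b + s, by linear_combination hs, hbs, by linarith⟩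
  refine ⟨!![-r, c; a, -r], ?_, fun i => ?_⟩
  · rw [det_fin_two_of]
    intro h
    exact mul_ne_zero hr0 (sub_ne_zero.2 hrb) (by linear_combination (h + hr) / 2)
  · fin_cases i <;>
      simp only [Fin.zero_eta, Fin.mk_one, Fin.isValue, mul_apply, transpose_apply, of_apply,
        cons_val', cons_val_zero, cons_val_one, cons_val_fin_one, Fin.sum_univ_two, hH.apply 0 1]
    · linear_combination a * hr
    · linear_combination c * hr

theorem exists_int_isotropic_basis {H : Matrix (Fin 2) (Fin 2) ℝ} (hH : H.IsSymm)
    (hdet : H.det < 0)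
    (hrat : ∀ v : Fin 2 → ℝ, v ≠ 0 → v ⬝ᵥ (H *ᵥ v) = 0 →
      ∃ (c : ℝ) (w : Fin 2 → ℚ), w ≠ 0 ∧ v = c • (fun i => (w i : ℝ))) :
    ∃ U : Matrix (Fin 2) (Fin 2) ℤ, U.det ≠ 0 ∧
      ∀ i, ((U.map (Int.cast : ℤ → ℝ))ᵀ * H * U.map (Int.cast : ℤ → ℝ)) i i = 0 := by
  obtain ⟨P, hP, hiso⟩ := exists_isotropic_basis_of_det_neg hH hdet
  have hcol :
      ∀ i, ∃ (u : Fin 2 → ℤ) (t : ℝ), t ≠ 0 ∧ (fun k => (u k : ℝ)) = t • Pᵀ i := by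
    intro i
    have hi : Pᵀ i ≠ 0 := fun h0 => hP (det_eq_zero_of_column_eq_zero i (congrFun h0))
    obtain ⟨_, _, -, hw⟩ := hrat _ hi (by rw [← hiso i, mul_mul_apply])
    exact exists_int_smul_eq_of_eq_smul_ratCast hw hi
  choose u t ht hu using hcol
  have hU : ((of u)ᵀ).map (Int.cast : ℤ → ℝ) = P * diagonal t := by
    ext k i
    simpa [mul_comm] using congrFun (hu i) k
  refine ⟨(of u)ᵀ, fun h0 => ?_, fun i => ?_⟩
  · have := congrArg (Int.cast : ℤ → ℝ) h0
    rw [Int.cast_det, hU, det_mul, det_diagonal, Fin.prod_univ_two, Int.cast_zero] at this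
    exact mul_ne_zero hP (mul_ne_zero (ht 0) (ht 1)) this
  · have hcongr : (P * diagonal t)ᵀ * H * (P * diagonal t)
        = diagonal t * (Pᵀ * H * P) * diagonal t := by
      simp only [transpose_mul, diagonal_transpose, Matrix.mul_assoc]
    rw [hU, hcongr, mul_diagonal, diagonal_mul, hiso, mul_zero, zero_mul]

theorem exists_int_hyperbolic_basis {H : Matrix (Fin 2) (Fin 2) ℝ} (hH : H.IsSymm)
    (hdet : H.det < 0)
    (hrat : ∀ v : Fin 2 → ℝ, v ≠ 0 → v ⬝ᵥ (H *ᵥ v) = 0 →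
      ∃ (c : ℝ) (w : Fin 2 → ℚ), w ≠ 0 ∧ v = c • (fun i => (w i : ℝ))) :
    ∃ (U : Matrix (Fin 2) (Fin 2) ℤ) (β : ℝ), U.det ≠ 0 ∧ β ≠ 0 ∧
      (U.map (Int.cast : ℤ → ℝ))ᵀ * H * U.map Int.cast = β • hyperbolicGram ℝ := by
  obtain ⟨U, hU, hiso⟩ := exists_int_isotropic_basis hH hdet hrat
  set K := (U.map (Int.cast : ℤ → ℝ))ᵀ * H * U.map Int.cast
  have hK : K = K 0 1 • hyperbolicGram ℝ :=
    eq_smul_of_isSymm_of_diag_eq_zero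
      (by simp only [K, IsSymm, transpose_mul, transpose_transpose, hH.eq, Matrix.mul_assoc]) hiso
  refine ⟨U, K 0 1, hU, fun h0 => ?_, hK⟩
  have hK0 : K.det ≠ 0 := by simp [K, det_mul, hdet.ne, ← Int.cast_det, hU]
  rw [hK, h0, zero_smul, det_zero] at hK0
  exact hK0 rfl

theorem bounded_of_congruence_convergent_general
    (H : Matrix (Fin 2) (Fin 2) ℝ) (hsymm : H.IsSymm) (hdet : H.det < 0)
    (hrat : ∀ v : Fin 2 → ℝ, v ≠ 0 → v ⬝ᵥ (H *ᵥ v) = 0 →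
      ∃ (c : ℝ) (w : Fin 2 → ℚ), w ≠ 0 ∧ v = c • (fun i => (w i : ℝ)))
    (M : ℕ → Matrix (Fin 2) (Fin 2) ℤ)
    (hdetM : ∀ n, (M n).det = 1 ∨ (M n).det = -1)
    (L : Matrix (Fin 2) (Fin 2) ℝ)
    (hconv : Tendsto
      (fun n => ((M n).map (Int.cast : ℤ → ℝ))ᵀ * H * ((M n).map (Int.cast : ℤ → ℝ)))
      atTop (𝓝 L)) :
    ∃ C : ℤ, ∀ n i j, |M n i j| ≤ C := by
  obtain ⟨U, β, hU, hβ, hK⟩ := exists_int_hyperbolic_basis hsymm hdet hrat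
  rw [← map_hyperbolicGram (Int.castRingHom ℝ)] at hK
  obtain ⟨C, hC⟩ := exists_abs_le_of_tendsto_map_intCast
    ((hconv.const_smul ((U.det : ℝ) ^ 2 / β)).congr
      fun n => det_sq_div_smul_transpose_mul_mul_eq hβ hK (M n))
  have hdetA : ∀ n, |(U.adjugate * M n).det| = |U.det| := by
    intro n; rcases hdetM n with h | h <;> simp [det_mul, det_adjugate, h]
  exact exists_abs_le_of_adjugate_mul hU fun n => abs_apply_le_of_abs_mul_le
    (abs_ne_zero.1 (hdetA n ▸ abs_ne_zero.2 hU))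
    (fun i j => hdetA n ▸ abs_mul_le_of_hyperbolicGram (hC n) i j)

/-- Linear core of Proposition 3.11: let `H` have signature `(1,1)` with both lightlike
lines rational. Then every sequence of integer matrices of determinant `±1` whose
congruence images of `H` converge to an invertible matrix is bounded. -/
theorem bounded_of_congruence_convergent
    (H : Matrix (Fin 2) (Fin 2) ℝ) (hsymm : H.IsSymm) (hdet : H.det < 0)
    (hrat : ∀ v : Fin 2 → ℝ, v ≠ 0 → v ⬝ᵥ (H *ᵥ v) = 0 →
      ∃ (c : ℝ) (w : Fin 2 → ℚ), w ≠ 0 ∧ v = c • (fun i => (w i : ℝ)))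
    (M : ℕ → Matrix (Fin 2) (Fin 2) ℤ)
    (hdetM : ∀ n, (M n).det = 1 ∨ (M n).det = -1)
    (L : Matrix (Fin 2) (Fin 2) ℝ) (hL : IsUnit L.det)
    (hconv : Tendsto
      (fun n => ((M n).map (Int.cast : ℤ → ℝ))ᵀ * H * ((M n).map (Int.cast : ℤ → ℝ)))
      atTop (𝓝 L)) :
    ∃ C : ℤ, ∀ n i j, |M n i j| ≤ C :=
  bounded_of_congruence_convergent_general H hsymm hdet hrat M hdetM L hconv
end

section
/- Let S = {H : H is a real symmetric 2×2 matrix with det H = −1}. If f : S → ℝ is a continuous function such that f(AᵀHA) = f(H) for every H ∈ S and every A ∈ SL(2,ℤ), then f is constant. -/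
/-!
Every form in the set `S` is `2 (u ⬝ x) (w ⬝ x)` for covectors `u`, `w` with `u ∧ w = 1`; its
null lines are `ker u` and `ker w`, and `H ↦ -H` exchanges their roles. If `u A = μ u` for some
`A ∈ SL(2,ℤ)` with `μ² ≠ 1`, then `A` acts on the forms `2 (u ⬝ x) ((w + t u) ⬝ x)` through an
affine map `t ↦ μ² t + σ` of `ℝ` that is not an isometry, so a continuous invariant `f` is
constant along them: `f` only depends on the first null line `u`. By Pell's equation every
`(q ± √2, 1)` with `q ∈ ℚ` is such an eigenvector; routing through the common second null line
`(-√2, 1)` shows that `f` takes one value on all forms whose first null line has slope in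
`ℚ + √2`, and these forms are dense.
-/

open Matrix

theorem ContractingWith.apply_eq_of_comp_eq {X Y : Type*} [MetricSpace X] [CompleteSpace X]
    [TopologicalSpace Y] [T2Space Y] {K : NNReal} {T : X → X} (hT : ContractingWith K T)
    {h : X → Y} (hh : Continuous h) (hhT : h ∘ T = h) (x y : X) : h x = h y := by
  have : Nonempty X := ⟨x⟩
  have h_eq_fixedPoint (z : X) : h z = h (fixedPoint T hT) := by
    have hiter (n : ℕ) : h (T^[n] z) = h z := by
      induction n with
      | zero => rfl
      | succ n ih => rw [Function.iterate_succ_apply', ← Function.comp_apply (f := h), hhT, ih]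
    have hlim := (hh.tendsto _).comp (hT.tendsto_iterate_fixedPoint z)
    simp only [Function.comp_def, hiter] at hlim
    exact tendsto_nhds_unique tendsto_const_nhds hlim
  rw [h_eq_fixedPoint x, h_eq_fixedPoint y]

theorem apply_eq_of_apply_mul_add_eq {Y : Type*} [TopologicalSpace Y] [T2Space Y]
    {h : ℝ → Y} (hh : Continuous h) {κ σ : ℝ} (hκ : |κ| ≠ 1)
    (hinv : ∀ t, h (κ * t + σ) = h t) (s t : ℝ) : h s = h t := by
  wlog hlt : |κ| < 1 generalizing κ σ
  · have hκ0 : κ ≠ 0 := by rintro rfl; simp at hlt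
    refine this (κ := κ⁻¹) (σ := -σ / κ) (by simpa using hκ) (fun t => ?_)
      (by rw [abs_inv]; exact inv_lt_one_of_one_lt₀ (lt_of_le_of_ne (not_lt.mp hlt) hκ.symm))
    rw [← hinv]
    congr 1
    field_simp
    ring
  have hT : ContractingWith ⟨|κ|, abs_nonneg κ⟩ (fun t => κ * t + σ) :=
    ⟨hlt, LipschitzWith.of_dist_le_mul fun x y => by
      simp [Real.dist_eq, ← mul_sub, abs_mul]; rfl⟩
  exact hT.apply_eq_of_comp_eq hh (funext hinv) s t

abbrev UnitLorentzForm := {H : Matrix (Fin 2) (Fin 2) ℝ // H.IsSymm ∧ H.det = -1}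

abbrev realMatrix (A : SpecialLinearGroup (Fin 2) ℤ) : Matrix (Fin 2) (Fin 2) ℝ :=
  (A : Matrix (Fin 2) (Fin 2) ℤ).map (Int.cast : ℤ → ℝ)

theorem det_realMatrix (A : SpecialLinearGroup (Fin 2) ℤ) : (realMatrix A).det = 1 := by
  simpa using ((Int.castRingHom ℝ).map_det (A : Matrix (Fin 2) (Fin 2) ℤ)).symm

def IsSL2ZInvariant (f : UnitLorentzForm → ℝ) : Prop :=
  ∀ (H₁ H₂ : UnitLorentzForm) (A : SpecialLinearGroup (Fin 2) ℤ),
    (realMatrix A)ᵀ * (H₁ : Matrix (Fin 2) (Fin 2) ℝ) * realMatrix A = H₂ →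
      f H₂ = f H₁

def wedge (u w : Fin 2 → ℝ) : ℝ := u 0 * w 1 - u 1 * w 0

section Wedge

variable (u v w : Fin 2 → ℝ)

theorem wedge_vecMul (M : Matrix (Fin 2) (Fin 2) ℝ) :
    wedge (u ᵥ* M) (w ᵥ* M) = M.det * wedge u w := by
  simp only [wedge, vecMul, dotProduct, Fin.sum_univ_two, det_fin_two]
  ring

theorem wedge_smul_left (c : ℝ) : wedge (c • u) w = c * wedge u w := by
  simp only [wedge, Pi.smul_apply, smul_eq_mul]
  ring

theorem wedge_smul_right (c : ℝ) : wedge u (c • w) = c * wedge u w := by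
  simp only [wedge, Pi.smul_apply, smul_eq_mul]
  ring

theorem wedge_add_smul_self (t : ℝ) : wedge u (w + t • u) = wedge u w := by
  simp only [wedge, Pi.add_apply, Pi.smul_apply, smul_eq_mul]
  ring

theorem wedge_neg_right_swap : wedge w (-u) = wedge u w := by
  simp only [wedge, Pi.neg_apply]
  ring

variable {u v w}

theorem eq_add_wedge_smul (h : wedge u w = 1) (h' : wedge u v = 1) : v = w + wedge v w • u := by
  ext i
  simp only [wedge] at h h'
  fin_cases i <;> simp [wedge] <;> linear_combination (-v _) * h + w _ * h'

end Wedge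

theorem det_vecMulVec_add_vecMulVec (u w : Fin 2 → ℝ) :
    (vecMulVec u w + vecMulVec w u).det = -wedge u w ^ 2 := by
  simp only [det_fin_two, Matrix.add_apply, vecMulVec_apply, wedge]
  ring

def nullForm (u w : Fin 2 → ℝ) (h : wedge u w = 1) : UnitLorentzForm :=
  ⟨vecMulVec u w + vecMulVec w u,
    by simp [IsSymm, transpose_add, transpose_vecMulVec, add_comm],
    by rw [det_vecMulVec_add_vecMulVec, h]; norm_num⟩

section NullForm

variable {u w u' w' : Fin 2 → ℝ}

@[simp]
theorem coe_nullForm (h : wedge u w = 1) :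
    (nullForm u w h : Matrix (Fin 2) (Fin 2) ℝ) = vecMulVec u w + vecMulVec w u := rfl

theorem nullForm_congr (h : wedge u w = 1) (h' : wedge u' w' = 1) (hu : u = u') (hw : w = w') :
    nullForm u w h = nullForm u' w' h' := by
  subst hu hw
  rfl

theorem nullForm_smul_left (c : ℝ) (h : wedge (c • u) w = 1) :
    nullForm (c • u) w h =
      nullForm u (c • w) (by rwa [wedge_smul_right, ← wedge_smul_left]) :=
  Subtype.ext <| by simp [smul_vecMulVec, vecMulVec_smul]

theorem transpose_mul_nullForm_mul (h : wedge u w = 1) (M : Matrix (Fin 2) (Fin 2) ℝ) :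
    Mᵀ * (nullForm u w h : Matrix (Fin 2) (Fin 2) ℝ) * M =
      vecMulVec (u ᵥ* M) (w ᵥ* M) + vecMulVec (w ᵥ* M) (u ᵥ* M) := by
  simp [Matrix.mul_add, Matrix.add_mul, mul_vecMulVec, vecMulVec_mul, mulVec_transpose]

theorem IsSL2ZInvariant.apply_nullForm_vecMul {f : UnitLorentzForm → ℝ}
    (hinv : IsSL2ZInvariant f)
    (A : SpecialLinearGroup (Fin 2) ℤ) (h : wedge u w = 1)
    (h' : wedge (u ᵥ* realMatrix A) (w ᵥ* realMatrix A) = 1) :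
    f (nullForm (u ᵥ* realMatrix A) (w ᵥ* realMatrix A) h') = f (nullForm u w h) :=
  hinv _ _ A (transpose_mul_nullForm_mul h _)

theorem wedge_vecMul_realMatrix (A : SpecialLinearGroup (Fin 2) ℤ) (h : wedge u w = 1) :
    wedge (u ᵥ* realMatrix A) (w ᵥ* realMatrix A) = 1 := by
  rw [wedge_vecMul, det_realMatrix, h, one_mul]

theorem exists_nullForm_eq (H : UnitLorentzForm) : ∃ u w h, nullForm u w h = H := by
  obtain ⟨H, hsymm, hdet⟩ := H
  have h10 : H 1 0 = H 0 1 := hsymm.apply 0 1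
  rw [det_fin_two, h10] at hdet
  by_cases hb : H 0 1 = 1
  · rw [hb] at hdet h10
    refine ⟨![1, H 1 1 / 2], ![H 0 0 / 2, 1], ?_, Subtype.ext ?_⟩
    · simp only [wedge, cons_val_zero, cons_val_one]
      linear_combination (-1/4 : ℝ) * hdet
    · ext i j
      fin_cases i <;> fin_cases j <;>
        simp only [coe_nullForm, Matrix.add_apply, vecMulVec_apply, cons_val_zero, cons_val_one,
          cons_val_fin_one, Fin.zero_eta, Fin.mk_one, Fin.isValue, h10, hb] <;>
        linarith
  · have hb' : H 0 1 - 1 ≠ 0 := sub_ne_zero.mpr hb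
    refine ⟨![H 0 0 / (H 0 1 - 1), 1], ![(H 0 1 - 1) / 2, H 1 1 / 2], ?_, Subtype.ext ?_⟩
    · simp only [wedge, cons_val_zero, cons_val_one]
      field_simp
      linear_combination hdet
    · ext i j
      fin_cases i <;> fin_cases j <;>
        simp only [coe_nullForm, Matrix.add_apply, vecMulVec_apply, cons_val_zero, cons_val_one,
          cons_val_fin_one, Fin.zero_eta, Fin.mk_one, Fin.isValue, h10] <;>
        field_simp <;> linarith

end NullForm

def negForm (H : UnitLorentzForm) : UnitLorentzForm :=
  ⟨-H, H.2.1.neg, by rw [det_neg, Fintype.card_fin, H.2.2]; norm_num⟩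

theorem continuous_negForm : Continuous negForm :=
  (continuous_subtype_val.neg).subtype_mk _

theorem negForm_nullForm {u w : Fin 2 → ℝ} (h : wedge w (-u) = 1) :
    negForm (nullForm w (-u) h) = nullForm u w (by rwa [← wedge_neg_right_swap]) :=
  Subtype.ext <| by simp [negForm, add_comm]

theorem IsSL2ZInvariant.comp_negForm {f : UnitLorentzForm → ℝ} (hinv : IsSL2ZInvariant f) :
    IsSL2ZInvariant (f ∘ negForm) := fun H₁ H₂ A h =>
  hinv (negForm H₁) (negForm H₂) A <| by simp [negForm, ← h]

def IsHyperbolicEigenvector (u : Fin 2 → ℝ) : Prop :=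
  ∃ (A : SpecialLinearGroup (Fin 2) ℤ) (μ : ℝ),
    μ ^ 2 ≠ 1 ∧ u ᵥ* realMatrix A = μ • u

theorem IsHyperbolicEigenvector.smul {u : Fin 2 → ℝ} (hu : IsHyperbolicEigenvector u)
    (c : ℝ) :
    IsHyperbolicEigenvector (c • u) := by
  obtain ⟨A, μ, hμ, hA⟩ := hu
  exact ⟨A, μ, hμ, by rw [smul_vecMul, hA, smul_comm]⟩

theorem not_isSquare_eight_mul_pow_four {n : ℤ} (hn : n ≠ 0) : ¬IsSquare (8 * n ^ 4) := by
  have hsqrt : √((8 * n ^ 4 : ℤ) : ℝ) = ((2 * n ^ 2 : ℤ) : ℝ) * √2 := by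
    push_cast
    rw [show (8 * n ^ 4 : ℝ) = (2 * n ^ 2) ^ 2 * 2 by ring, Real.sqrt_mul (sq_nonneg _),
      Real.sqrt_sq (by positivity)]
  refine (irrational_sqrt_intCast_iff_of_nonneg (by positivity)).mp ?_
  rw [hsqrt]
  exact irrational_sqrt_two.intCast_mul (by positivity)

theorem isHyperbolicEigenvector_ratCast_add (q : ℚ) {ε : ℝ} (hε : ε ^ 2 = 2) :
    IsHyperbolicEigenvector ![q + ε, 1] := by
  set m : ℤ := q.num
  set n : ℤ := (q.den : ℤ)
  have hn : n ≠ 0 := by simp [n]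
  have hq : (q : ℝ) * n = m := by exact_mod_cast q.mul_den_eq_num
  obtain ⟨x, y, hxy, hy⟩ :=
    Pell.exists_of_not_isSquare (d := 8 * n ^ 4) (by positivity)
      (not_isSquare_eight_mul_pow_four hn)
  -- With `q = m / n`, `q + ε` is a root of `n²X² - 2mnX + m² - 2n²`, of discriminant `8n⁴`;
  -- `A` is the matrix attached to this quadratic and the Pell solution `(x, y)`.
  let A : SpecialLinearGroup (Fin 2) ℤ :=
    ⟨!![x + 2 * m * n * y, 2 * n ^ 2 * y; -2 * (m ^ 2 - 2 * n ^ 2) * y, x - 2 * m * n * y],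
      by rw [det_fin_two_of]; linear_combination hxy⟩
  have hxy' : (x : ℝ) ^ 2 - 8 * (n : ℝ) ^ 4 * (y : ℝ) ^ 2 = 1 := by exact_mod_cast hxy
  refine ⟨A, x + 2 * n ^ 2 * y * ε, fun hμ => ?_, ?_⟩
  · have hny : (4 * n ^ 2 * y : ℝ) ≠ 0 := by positivity
    have hxε : (x : ℝ) * ε = -4 * n ^ 2 * y := mul_left_cancel₀ hny <| by
      linear_combination hμ - hxy' - 4 * (n : ℝ) ^ 4 * (y : ℝ) ^ 2 * hε
    have : (2 : ℝ) = 0 := by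
      linear_combination (x * ε - 4 * n ^ 2 * y) * hxε - (x : ℝ) ^ 2 * hε - 2 * hxy'
    norm_num at this
  · ext i
    fin_cases i <;> simp [A, vecMul, dotProduct, Fin.sum_univ_two]
    · linear_combination (2 * m * y - 2 * n * y * ε) * hq - 2 * (n : ℝ) ^ 2 * y * hε
    · linear_combination 2 * n * y * hq

section Invariant

variable {f : UnitLorentzForm → ℝ} (hf : Continuous f) (hinv : IsSL2ZInvariant f)
include hf hinv

theorem IsHyperbolicEigenvector.apply_nullForm_eq {u w w' : Fin 2 → ℝ}
    (hu : IsHyperbolicEigenvector u) (h : wedge u w = 1) (h' : wedge u w' = 1) :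
    f (nullForm u w h) = f (nullForm u w' h') := by
  obtain ⟨A, μ, hμ, hA⟩ := hu
  have hwA : wedge u (μ • (w ᵥ* realMatrix A)) = 1 := by
    rw [wedge_smul_right, ← wedge_smul_left, ← hA, wedge_vecMul_realMatrix A h]
  set σ := wedge (μ • (w ᵥ* realMatrix A)) w
  have hwt (t : ℝ) : wedge u (w + t • u) = 1 := by rw [wedge_add_smul_self, h]
  set g : ℝ → ℝ := fun t => f (nullForm u (w + t • u) (hwt t))
  have hg : Continuous g :=
    hf.comp <| Continuous.subtype_mk (by fun_prop) _
  have hgμ (t : ℝ) : g (μ ^ 2 * t + σ) = g t := by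
    have hwtA := wedge_vecMul_realMatrix A (hwt t)
    calc g (μ ^ 2 * t + σ)
        = f (nullForm (μ • u) ((w + t • u) ᵥ* realMatrix A) (by rwa [hA] at hwtA)) := by
          rw [nullForm_smul_left]
          refine congrArg f (nullForm_congr _ _ rfl ?_)
          rw [add_vecMul, smul_vecMul, hA, smul_add, eq_add_wedge_smul h hwA]
          module
      _ = g t := by
          simp only [← hA]
          exact hinv.apply_nullForm_vecMul A _ _
  have hμ' : |μ ^ 2| ≠ 1 := by rwa [abs_of_nonneg (sq_nonneg μ)]
  calc f (nullForm u w h) = g 0 := by simp only [g, zero_smul, add_zero]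
    _ = g (wedge w' w) := apply_eq_of_apply_mul_add_eq hg hμ' hgμ _ _
    _ = f (nullForm u w' h') := congrArg f (nullForm_congr _ _ rfl (eq_add_wedge_smul h h').symm)

theorem IsHyperbolicEigenvector.apply_nullForm_eq_of_right {u u' w : Fin 2 → ℝ}
    (hw : IsHyperbolicEigenvector w) (h : wedge u w = 1) (h' : wedge u' w = 1) :
    f (nullForm u w h) = f (nullForm u' w h') := by
  have hneg := hw.apply_nullForm_eq (hf.comp continuous_negForm) hinv.comp_negForm
    (w := -u) (w' := -u') (by rwa [wedge_neg_right_swap]) (by rwa [wedge_neg_right_swap])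
  simpa only [Function.comp_apply, negForm_nullForm] using hneg

theorem IsHyperbolicEigenvector.apply_nullForm_eq_apply_nullForm {u v w x : Fin 2 → ℝ}
    (hu : IsHyperbolicEigenvector u) (hv : IsHyperbolicEigenvector v) (huv : wedge u v ≠ 0)
    (h : wedge u w = 1) (h' : wedge x v = 1) :
    f (nullForm u w h) = f (nullForm x v h') := by
  have hc : wedge ((wedge u v)⁻¹ • u) v = 1 := by rw [wedge_smul_left, inv_mul_cancel₀ huv]
  calc f (nullForm u w h)
      = f (nullForm u ((wedge u v)⁻¹ • v) (by rwa [wedge_smul_right, ← wedge_smul_left])) :=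
        hu.apply_nullForm_eq hf hinv h _
    _ = f (nullForm ((wedge u v)⁻¹ • u) v hc) := by rw [nullForm_smul_left]
    _ = f (nullForm x v h') := hv.apply_nullForm_eq_of_right hf hinv hc h'

end Invariant

noncomputable def baseForm : UnitLorentzForm := nullForm ![1, 0] ![-√2, 1] (by simp [wedge])

section BaseForm

variable {f : UnitLorentzForm → ℝ} (hf : Continuous f) (hinv : IsSL2ZInvariant f)
include hf hinv

theorem apply_nullForm_smul_eq_apply_baseForm {c : ℝ} (hc : c ≠ 0) (q : ℚ) {w : Fin 2 → ℝ}
    (h : wedge (c • ![(q : ℝ) + √2, 1]) w = 1) :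
    f (nullForm (c • ![(q : ℝ) + √2, 1]) w h) = f baseForm := by
  have hq : (q : ℝ) + 2 * √2 ≠ 0 :=
    (irrational_sqrt_two.natCast_mul two_ne_zero).ratCast_add q |>.ne_zero
  have hwedge : wedge (c • ![(q : ℝ) + √2, 1]) ![-√2, 1] ≠ 0 := by
    rw [wedge_smul_left]
    refine mul_ne_zero hc (ne_of_eq_of_ne ?_ hq)
    simp [wedge]
    ring
  have hv : IsHyperbolicEigenvector ![-√2, 1] := by
    simpa using isHyperbolicEigenvector_ratCast_add 0 (ε := -√2) (by simp)
  exact ((isHyperbolicEigenvector_ratCast_add q (Real.sq_sqrt zero_le_two)).smul c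
    |>.apply_nullForm_eq_apply_nullForm hf hinv hv hwedge _ _)

theorem apply_nullForm_eq_apply_baseForm_of_ne_zero {u w : Fin 2 → ℝ} (h : wedge u w = 1)
    (hu : u 1 ≠ 0) : f (nullForm u w h) = f baseForm := by
  -- The real shears `P r` turn the first null line to any slope while keeping `wedge = 1`.
  set P : ℝ → Matrix (Fin 2) (Fin 2) ℝ := fun r => !![1, 0; r, 1]
  have hP (r : ℝ) : wedge (u ᵥ* P r) (w ᵥ* P r) = 1 := by
    rw [wedge_vecMul, h, det_fin_two_of]; ring
  set g : ℝ → ℝ := fun r => f (nullForm (u ᵥ* P r) (w ᵥ* P r) (hP r))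
  have hg : Continuous g := hf.comp <| Continuous.subtype_mk (by fun_prop) _
  set r : ℚ → ℝ := fun q => q + √2 - u 0 / u 1
  have hr : DenseRange r := by
    have := (Homeomorph.addRight (√2 - u 0 / u 1)).surjective.denseRange.comp
      Rat.denseRange_cast (Homeomorph.continuous _)
    simpa [r, Function.comp_def, add_sub_assoc] using this
  have hgr : g ∘ r = (fun _ => f baseForm) ∘ r := by
    funext q
    have hur : u ᵥ* P (r q) = u 1 • ![(q : ℝ) + √2, 1] := by
      ext i
      fin_cases i <;> simp [P, r, vecMul, dotProduct, Fin.sum_univ_two]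
      field_simp
      ring
    calc g (r q)
        = f (nullForm (u 1 • ![(q : ℝ) + √2, 1]) (w ᵥ* P (r q)) (hur ▸ hP (r q))) :=
          congrArg f (nullForm_congr _ _ hur rfl)
      _ = f baseForm := apply_nullForm_smul_eq_apply_baseForm hf hinv hu q _
  have hP0 : P 0 = 1 := by simp [P, one_fin_two]
  calc f (nullForm u w h) = g 0 := congrArg f (nullForm_congr _ _ (by simp [hP0]) (by simp [hP0]))
    _ = f baseForm := congrFun (hr.equalizer hg continuous_const hgr) 0

theorem apply_eq_apply_baseForm (H : UnitLorentzForm) : f H = f baseForm := by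
  obtain ⟨u, w, h, rfl⟩ := exists_nullForm_eq H
  by_cases hu : u 1 = 0
  · have hS := wedge_vecMul_realMatrix ModularGroup.S h
    rw [← hinv.apply_nullForm_vecMul ModularGroup.S h hS]
    refine apply_nullForm_eq_apply_baseForm_of_ne_zero hf hinv hS ?_
    have hu0 : u 0 ≠ 0 := by rintro hu0; simp [wedge, hu0, hu] at h
    simpa [ModularGroup.coe_S, vecMul, dotProduct, Fin.sum_univ_two] using hu0
  · exact apply_nullForm_eq_apply_baseForm_of_ne_zero hf hinv h hu

end BaseForm

/-- Any continuous function on the set of real symmetric `2×2` matrices of determinant `−1`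
(i.e. quadratic forms of signature `(1,1)` and volume `1`) which is invariant under the
congruence action `H ↦ AᵀHA` of `SL(2,ℤ)` is constant. -/
theorem sl2z_invariant_continuous_function_constant
    (f : {H : Matrix (Fin 2) (Fin 2) ℝ // H.IsSymm ∧ H.det = -1} → ℝ)
    (hf : Continuous f)
    (hinv : ∀ (H₁ H₂ : {H : Matrix (Fin 2) (Fin 2) ℝ // H.IsSymm ∧ H.det = -1})
      (A : Matrix.SpecialLinearGroup (Fin 2) ℤ),
      ((A : Matrix (Fin 2) (Fin 2) ℤ).map (Int.cast : ℤ → ℝ))ᵀ * (H₁ : Matrix (Fin 2) (Fin 2) ℝ) *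
        ((A : Matrix (Fin 2) (Fin 2) ℤ).map (Int.cast : ℤ → ℝ)) = (H₂ : Matrix (Fin 2) (Fin 2) ℝ) →
      f H₂ = f H₁) :
    ∀ H₁ H₂, f H₁ = f H₂ := by
  intro H₁ H₂
  rw [apply_eq_apply_baseForm hf hinv H₁, apply_eq_apply_baseForm hf hinv H₂]
end

section
/- Let A be the integer matrix [[2,1],[1,1]], let λ > 1 and Y ∈ ℝ² be such that AY = λY with Y ≠ 0, and let g be a real symmetric 2×2 matrix with Aᵀ g A = g. Let f : ℝ² → ℝ be a continuously differentiable function which is ℤ²-periodic (f(x + z) = f(x) for all z ∈ ℤ²). Define h_n : ℝ² → (2×2 real matrices) by h_n(x) = (Aⁿ)ᵀ ( g + f(Aⁿ x) · (gY)(gY)ᵀ ) Aⁿ. Then h_n converges to the constant map g uniformly on ℝ², and the first derivatives of h_n converge uniformly to 0; i.e., sup_{x∈ℝ²} ‖h_n(x) − g‖ → 0 and sup_{x∈ℝ²} ‖D h_n(x)‖ → 0. -/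
open Matrix Filter Topology

/-!
Since `Aᵀ g A = g` and `A Y = λ Y`, the covector `u = g Y` satisfies `Aᵀ u = λ⁻¹ u`, so the
pullback of `g + f · u uᵀ` by `Aⁿ` is `g + λ⁻²ⁿ (f ∘ Aⁿ) · u uᵀ`. By periodicity `f` and `Df` are
bounded, and `‖D(f ∘ Aⁿ)‖ ≤ ‖Df‖ ‖A‖ⁿ ≤ 3ⁿ ‖Df‖` for the row-sum operator norm. As `λ² = 3λ - 1`
with `λ > 1` forces `λ² > 3`, both the perturbation and its derivative decay geometrically.
-/

namespace Matrix

section Field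

variable {n K : Type*} [Fintype n] [Field K] {A g : Matrix n n K} {Y : n → K} {l : K}

theorem transpose_mulVec_mulVec_eq_inv_smul (hAg : Aᵀ * g * A = g) (hAY : A *ᵥ Y = l • Y)
    (hl : l ≠ 0) : Aᵀ *ᵥ (g *ᵥ Y) = l⁻¹ • (g *ᵥ Y) := by
  rw [eq_inv_smul_iff₀ hl]
  conv_rhs => rw [← hAg]
  rw [← mulVec_mulVec, ← mulVec_mulVec, hAY, mulVec_smul, mulVec_smul]

theorem transpose_mul_add_smul_vecMulVec_mul (M : Matrix n n K) (u : n → K) (c : K)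
    (hg : Mᵀ * g * M = g) :
    Mᵀ * (g + c • vecMulVec u u) * M = g + c • vecMulVec (Mᵀ *ᵥ u) (Mᵀ *ᵥ u) := by
  rw [Matrix.mul_add, Matrix.add_mul, hg, Matrix.mul_smul, Matrix.smul_mul, mul_vecMulVec,
    vecMulVec_mul, mulVec_transpose]

variable [DecidableEq n]

theorem pow_mulVec_of_mulVec_eq_smul (hAY : A *ᵥ Y = l • Y) (k : ℕ) :
    A ^ k *ᵥ Y = l ^ k • Y := by
  induction k with
  | zero => simp
  | succ k ih => rw [pow_succ', ← mulVec_mulVec, ih, mulVec_smul, hAY, smul_smul, pow_succ]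

theorem transpose_pow_mul_mul_pow (hAg : Aᵀ * g * A = g) (k : ℕ) :
    (A ^ k)ᵀ * g * A ^ k = g := by
  induction k with
  | zero => simp
  | succ k ih =>
    simp only [pow_succ', transpose_mul, Matrix.mul_assoc]
    rw [← Matrix.mul_assoc Aᵀ, ← Matrix.mul_assoc (Aᵀ * g), hAg, ← Matrix.mul_assoc, ih]

theorem transpose_pow_mul_add_smul_vecMulVec_mul_pow (hAg : Aᵀ * g * A = g)
    (hAY : A *ᵥ Y = l • Y) (hl : l ≠ 0) (c : K) (k : ℕ) :
    (A ^ k)ᵀ * (g + c • vecMulVec (g *ᵥ Y) (g *ᵥ Y)) * A ^ k =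
      g + (c * (l ^ 2)⁻¹ ^ k) • vecMulVec (g *ᵥ Y) (g *ᵥ Y) := by
  have hgk := transpose_pow_mul_mul_pow hAg k
  rw [transpose_mul_add_smul_vecMulVec_mul _ _ _ hgk, transpose_mulVec_mulVec_eq_inv_smul hgk
    (pow_mulVec_of_mulVec_eq_smul hAY k) (pow_ne_zero k hl), smul_vecMulVec, vecMulVec_smul,
    smul_smul, smul_smul]
  congr 2
  ring

end Field

theorem differentiable_mulVec {m n : Type*} [Fintype m] [Fintype n] (M : Matrix m n ℝ) :
    Differentiable ℝ (M *ᵥ ·) :=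
  (ContinuousLinearMap.mk (mulVecLin M)).differentiable

end Matrix

def IntPeriodic {ι E : Type*} (F : (ι → ℝ) → E) : Prop :=
  ∀ (x : ι → ℝ) (z : ι → ℤ), F (x + fun i => (z i : ℝ)) = F x

namespace IntPeriodic

variable {ι E : Type*} {F : (ι → ℝ) → E}

theorem exists_norm_le [SeminormedAddCommGroup E] (hper : IntPeriodic F) (hF : Continuous F) :
    ∃ C, ∀ x, ‖F x‖ ≤ C := by
  obtain ⟨C, hC⟩ := (isCompact_Icc (a := (0 : ι → ℝ)) (b := 1)).exists_bound_of_continuousOn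
    hF.continuousOn
  refine ⟨C, fun x => ?_⟩
  have hfract : F x = F fun i => Int.fract (x i) := by
    rw [← hper (fun i => Int.fract (x i)) fun i => ⌊x i⌋]
    congr 1
    funext i
    exact (Int.fract_add_floor (x i)).symm
  rw [hfract]
  exact hC _ ⟨fun i => Int.fract_nonneg _, fun i => (Int.fract_lt_one _).le⟩

theorem fderiv [Fintype ι] [NormedAddCommGroup E] [NormedSpace ℝ E] (hper : IntPeriodic F) :
    IntPeriodic (fderiv ℝ F) := by
  intro x z
  rw [← fderiv_comp_add_right, funext (hper · z)]

end IntPeriodic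

section OperatorNorm

open scoped Matrix.Norms.Operator

variable {E : Type*} [NormedAddCommGroup E] [NormedSpace ℝ E]

theorem norm_fderiv_comp_mulVec_le {m n : Type*} [Fintype m] [Fintype n] {F : (m → ℝ) → E}
    (M : Matrix m n ℝ) {x : n → ℝ} (hF : DifferentiableAt ℝ F (M *ᵥ x)) :
    ‖fderiv ℝ (fun y => F (M *ᵥ y)) x‖ ≤ ‖fderiv ℝ F (M *ᵥ x)‖ * ‖M‖ := by
  let L : (n → ℝ) →L[ℝ] (m → ℝ) := ContinuousLinearMap.mk (mulVecLin M)
  have hd : HasFDerivAt (fun y => F (M *ᵥ y)) ((fderiv ℝ F (M *ᵥ x)).comp L) x :=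
    hF.hasFDerivAt.comp x L.hasFDerivAt
  rw [hd.fderiv, linfty_opNorm_eq_opNorm]
  exact ContinuousLinearMap.opNorm_comp_le _ _

theorem norm_catMap_le : ‖(!![2, 1; 1, 1] : Matrix (Fin 2) (Fin 2) ℝ)‖ ≤ 3 := by
  rw [← NNReal.coe_ofNat (n := 3), ← coe_nnnorm, NNReal.coe_le_coe, linfty_opNNNorm_def]
  refine Finset.sup_le fun i _ => ?_
  fin_cases i <;> simp [Fin.sum_univ_two] <;> norm_num

theorem IntPeriodic.exists_norm_fderiv_comp_catMap_pow_mulVec_le {F : (Fin 2 → ℝ) → E}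
    (hper : IntPeriodic F) (hF : ContDiff ℝ 1 F) :
    ∃ C, ∀ (k : ℕ) (x : Fin 2 → ℝ),
      ‖_root_.fderiv ℝ (fun y => F (!![2, 1; 1, 1] ^ k *ᵥ y)) x‖ ≤ C * 3 ^ k := by
  obtain ⟨C, hC⟩ := hper.fderiv.exists_norm_le (hF.continuous_fderiv one_ne_zero)
  have hC₀ : 0 ≤ C := (norm_nonneg _).trans (hC 0)
  refine ⟨C, fun k x => (norm_fderiv_comp_mulVec_le _ (hF.differentiable one_ne_zero _)).trans ?_⟩
  exact mul_le_mul (hC _)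
    ((norm_pow_le _ k).trans (pow_le_pow_left₀ (norm_nonneg _) norm_catMap_le k))
    (norm_nonneg _) hC₀

end OperatorNorm

theorem three_lt_sq_of_catMap_mulVec_eq_smul {Y : Fin 2 → ℝ} {l : ℝ} (hl : 1 < l) (hY : Y ≠ 0)
    (hAY : !![2, 1; 1, 1] *ᵥ Y = l • Y) : 3 < l ^ 2 := by
  have hdet : (l • 1 - !![2, 1; 1, 1] : Matrix (Fin 2) (Fin 2) ℝ).det = 0 :=
    exists_mulVec_eq_zero_iff.1
      ⟨Y, hY, by rw [sub_mulVec, smul_mulVec, one_mulVec, hAY, sub_self]⟩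
  have hchar : (l - 2) * (l - 1) - 1 = 0 := by simpa [det_fin_two] using hdet
  nlinarith

theorem abs_mul_apply_le_norm_sq {ι : Type*} [Fintype ι] (u : ι → ℝ) (i j : ι) :
    |u i * u j| ≤ ‖u‖ ^ 2 := by
  rw [abs_mul, sq]
  exact mul_le_mul (norm_le_pi_norm u i) (norm_le_pi_norm u j) (abs_nonneg _) (norm_nonneg _)

theorem exists_pow_mul_lt {r : ℝ} (h₀ : 0 ≤ r) (h₁ : r < 1) (C : ℝ) {ε : ℝ} (hε : 0 < ε) :
    ∃ N : ℕ, ∀ n ≥ N, r ^ n * C < ε := by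
  have := (tendsto_pow_atTop_nhds_zero_of_lt_one h₀ h₁).mul_const C
  rw [zero_mul] at this
  exact eventually_atTop.1 (this.eventually (gt_mem_nhds hε))

theorem anosov_pullback_tendsto_C1_general
    (A : Matrix (Fin 2) (Fin 2) ℝ) (hA : A = !![2, 1; 1, 1])
    (l : ℝ) (hl : 1 < l) (Y : Fin 2 → ℝ) (hY : Y ≠ 0) (hAY : A *ᵥ Y = l • Y)
    (g : Matrix (Fin 2) (Fin 2) ℝ) (hAg : Aᵀ * g * A = g)
    (f : (Fin 2 → ℝ) → ℝ) (hf : ContDiff ℝ 1 f)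
    (hper : ∀ (x : Fin 2 → ℝ) (z : Fin 2 → ℤ), f (x + fun i => (z i : ℝ)) = f x)
    (h : ℕ → (Fin 2 → ℝ) → Matrix (Fin 2) (Fin 2) ℝ)
    (hdef : ∀ n x, h n x =
      (A ^ n)ᵀ * (g + f ((A ^ n) *ᵥ x) • vecMulVec (g *ᵥ Y) (g *ᵥ Y)) * (A ^ n)) :
    (∀ ε > 0, ∃ N : ℕ, ∀ n ≥ N, ∀ (x : Fin 2 → ℝ) (i j : Fin 2),
      |h n x i j - g i j| < ε) ∧
    (∀ ε > 0, ∃ N : ℕ, ∀ n ≥ N, ∀ (x : Fin 2 → ℝ) (i j : Fin 2),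
      ‖fderiv ℝ (fun y => h n y i j) x‖ < ε) := by
  subst hA
  set u := g *ᵥ Y
  set q := (l ^ 2)⁻¹
  have hentry (n : ℕ) (x : Fin 2 → ℝ) (i j : Fin 2) :
      h n x i j = g i j + q ^ n * (u i * u j) * f (!![2, 1; 1, 1] ^ n *ᵥ x) := by
    rw [hdef, transpose_pow_mul_add_smul_vecMulVec_mul_pow hAg hAY (by positivity)]
    simp only [Matrix.add_apply, Matrix.smul_apply, vecMulVec_apply, smul_eq_mul]
    ring
  have hq₀ : 0 ≤ q := by positivity
  have hq₁ : 3 * q < 1 := by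
    rw [← div_eq_mul_inv, div_lt_one (by positivity)]
    exact three_lt_sq_of_catMap_mulVec_eq_smul hl hY hAY
  obtain ⟨C₀, hC₀⟩ := IntPeriodic.exists_norm_le hper hf.continuous
  obtain ⟨C₁, hC₁⟩ := IntPeriodic.exists_norm_fderiv_comp_catMap_pow_mulVec_le hper hf
  constructor
  · intro ε hε
    obtain ⟨N, hN⟩ := exists_pow_mul_lt hq₀ (by linarith) (‖u‖ ^ 2 * C₀) hε
    refine ⟨N, fun n hn x i j => lt_of_le_of_lt ?_ (hN n hn)⟩
    rw [hentry, add_sub_cancel_left, abs_mul, abs_mul, abs_pow, abs_of_nonneg hq₀, mul_assoc]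
    gcongr
    exacts [abs_mul_apply_le_norm_sq u i j, hC₀ _]
  · intro ε hε
    obtain ⟨N, hN⟩ := exists_pow_mul_lt (by positivity) hq₁ (‖u‖ ^ 2 * C₁) hε
    refine ⟨N, fun n hn x i j => lt_of_le_of_lt ?_ (hN n hn)⟩
    have hfA : DifferentiableAt ℝ (fun y => f (!![2, 1; 1, 1] ^ n *ᵥ y)) x :=
      (hf.differentiable one_ne_zero _).comp x (differentiable_mulVec _ x)
    rw [funext (hentry n · i j), fderiv_const_add, fderiv_const_mul hfA, norm_smul,
      Real.norm_eq_abs, abs_mul, abs_pow, abs_of_nonneg hq₀]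
    calc q ^ n * |u i * u j| * ‖fderiv ℝ (fun y => f (!![2, 1; 1, 1] ^ n *ᵥ y)) x‖
        ≤ q ^ n * ‖u‖ ^ 2 * (C₁ * 3 ^ n) := by
          gcongr
          exacts [abs_mul_apply_le_norm_sq u i j, hC₁ n x]
      _ = (3 * q) ^ n * (‖u‖ ^ 2 * C₁) := by ring

/-- The example of Remark 3 after Proposition 3.11: let `A = [[2,1],[1,1]]` be the Anosov
matrix, `Y` an eigenvector for an eigenvalue `l > 1`, `g` an `A`-invariant symmetric matrix
and `f` a `C¹`, `ℤ²`-periodic function. Then the pullbacks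
`hₙ(x) = (Aⁿ)ᵀ (g + f(Aⁿx) · (gY)(gY)ᵀ) Aⁿ` of the perturbed metric `g + f·(gY)(gY)ᵀ`
converge to `g` uniformly, together with their first derivatives (which converge uniformly
to `0`); i.e. the convergence is `C¹`. -/
theorem anosov_pullback_tendsto_C1
    (A : Matrix (Fin 2) (Fin 2) ℝ) (hA : A = !![2, 1; 1, 1])
    (l : ℝ) (hl : 1 < l) (Y : Fin 2 → ℝ) (hY : Y ≠ 0) (hAY : A *ᵥ Y = l • Y)
    (g : Matrix (Fin 2) (Fin 2) ℝ) (hgsymm : g.IsSymm) (hAg : Aᵀ * g * A = g)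
    (f : (Fin 2 → ℝ) → ℝ) (hf : ContDiff ℝ 1 f)
    (hper : ∀ (x : Fin 2 → ℝ) (z : Fin 2 → ℤ), f (x + fun i => (z i : ℝ)) = f x)
    (h : ℕ → (Fin 2 → ℝ) → Matrix (Fin 2) (Fin 2) ℝ)
    (hdef : ∀ n x, h n x =
      (A ^ n)ᵀ * (g + f ((A ^ n) *ᵥ x) • vecMulVec (g *ᵥ Y) (g *ᵥ Y)) * (A ^ n)) :
    (∀ ε > 0, ∃ N : ℕ, ∀ n ≥ N, ∀ (x : Fin 2 → ℝ) (i j : Fin 2),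
      |h n x i j - g i j| < ε) ∧
    (∀ ε > 0, ∃ N : ℕ, ∀ n ≥ N, ∀ (x : Fin 2 → ℝ) (i j : Fin 2),
      ‖fderiv ℝ (fun y => h n y i j) x‖ < ε) :=
  anosov_pullback_tendsto_C1_general A hA l hl Y hY hAY g hAg f hf hper h hdef
end
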